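/- arXiv:2407.18205 — 3 statements merged into one kernel-verified Lean document; each statement's English description precedes it below -/
import Mathlib

section
/- Let a(n) denote the number of GSAWs on 𝒢_2 starting at (0,1) with length n. Then a(0) = a(1) = a(2) = 0, a(3) = 1, and for every n ≥ 4, a(n) = 2·a(n−2) + a(n−3). -/
/-- Adjacency of two lattice points: they differ by exactly 1 in one
coordinate and agree in the other. -/
def adjPt (u v : ℕ × ℕ) : Prop :=
  (u.1 = v.1 ∧ (u.2 + 1 = v.2 ∨ v.2 + 1 = u.2)) ∨
  (u.2 = v.2 ∧ (u.1 + 1 = v.1 ∨ v.1 + 1 = u.1))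

/-- Adjacency in the grid graph `𝒢_h` of height `h` (vertex set ℕ × {0, ..., h-1}). -/
def gridAdj (h : ℕ) (u v : ℕ × ℕ) : Prop :=
  adjPt u v ∧ u.2 < h ∧ v.2 < h

/-- A growing self-avoiding walk (GSAW) on `𝒢_h` starting at the top-left corner
`(0, h-1)`: a nonempty list of pairwise distinct vertices of the grid, consecutive
vertices adjacent, whose final vertex is trapped (all its neighbors in the grid
already belong to the walk). -/
structure IsGSAW (h : ℕ) (l : List (ℕ × ℕ)) : Prop where
  ne : l ≠ []
  head : l.head? = some (0, h - 1)
  mem_grid : ∀ v ∈ l, v.2 < h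
  nodup : l.Nodup
  chain : l.Chain' (gridAdj h)
  trapped : ∀ w : ℕ × ℕ, gridAdj h (l.getLast ne) w → w ∈ l

/-- The number of GSAWs on `𝒢_h` with length (number of edges) `n`. -/
noncomputable def gsawLenCount (h n : ℕ) : ℕ :=
  Set.ncard {l : List (ℕ × ℕ) | IsGSAW h l ∧ l.length = n + 1}

namespace Gsaw2

abbrev V := ℕ × ℕ

/-- numeric unfolding of adjacency in height-2 grid -/
lemma adj_def (u v : V) : gridAdj 2 u v ↔
    (u.2 < 2 ∧ v.2 < 2 ∧ ((u.1 = v.1 ∧ (u.2 + 1 = v.2 ∨ v.2 + 1 = u.2)) ∨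
      (u.2 = v.2 ∧ (u.1 + 1 = v.1 ∨ v.1 + 1 = u.1)))) := by
  unfold gridAdj adjPt; tauto

def up (p : V) : V := (p.1 + 1, p.2)
def dn (p : V) : V := (p.1 - 1, p.2)
def fl (p : V) : V := (p.1 + 1, 1 - p.2)
def gl (p : V) : V := (p.1 - 1, 1 - p.2)

lemma up_inj : Function.Injective up := by
  rintro ⟨a,b⟩ ⟨c,d⟩ h; simp [up] at h; simp [h.1, h.2]

lemma adj_up {u v : V} : gridAdj 2 (up u) (up v) ↔ gridAdj 2 u v := by
  obtain ⟨a,b⟩ := u; obtain ⟨c,d⟩ := v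
  simp only [adj_def, up]; omega

lemma adj_fl {u v : V} (h : gridAdj 2 u v) : gridAdj 2 (fl u) (fl v) := by
  obtain ⟨a,b⟩ := u; obtain ⟨c,d⟩ := v
  simp only [adj_def, fl] at *; omega

lemma adj_fl_rev {u v : V} (hu : u.2 < 2) (hv : v.2 < 2)
    (h : gridAdj 2 (fl u) (fl v)) : gridAdj 2 u v := by
  obtain ⟨a,b⟩ := u; obtain ⟨c,d⟩ := v
  simp only [adj_def, fl] at *; omega

/-- neighbors of a point in the height-2 grid -/
lemma adj_cases {u z : V} (h : gridAdj 2 u z) :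
    u.2 < 2 ∧ z.2 < 2 ∧
      (z = (u.1 + 1, u.2) ∨ (u.1 = z.1 + 1 ∧ z.2 = u.2) ∨ (z.1 = u.1 ∧ z.2 = 1 - u.2)) := by
  obtain ⟨a,b⟩ := u; obtain ⟨c,d⟩ := z
  simp only [adj_def, Prod.mk.injEq] at *; omega

def S (n : ℕ) : Set (List V) := {l | IsGSAW 2 l ∧ l.length = n + 1}

lemma gsaw_count_eq (n : ℕ) : gsawLenCount 2 n = (S n).ncard := rfl

lemma adj01 : gridAdj 2 (0,1) (0,0) := by simp [adj_def]
lemma adj0011 : gridAdj 2 (0,1) (1,1) := by simp [adj_def]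

/-- every GSAW has at least two vertices -/
lemma tail_ne (l : List V) (h : IsGSAW 2 l) : l.tail ≠ [] := by
  intro ht
  obtain ⟨x, rfl⟩ : ∃ x, l = [x] := by
    cases l with
    | nil => exact absurd rfl h.ne
    | cons a t => cases t with
      | nil => exact ⟨a, rfl⟩
      | cons b t' => simp at ht
  have hx : x = (0,1) := by simpa using h.head
  subst hx
  have : ((0:ℕ),(0:ℕ)) ∈ [((0:ℕ),(1:ℕ))] := h.trapped _ (by simpa using adj01)
  simp [Prod.ext_iff] at this

/-- the second vertex of a GSAW is (1,1) or (0,0) -/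
lemma second_vertex (l : List V) (h : IsGSAW 2 l) :
    l.tail.head? = some (1,1) ∨ l.tail.head? = some (0,0) := by
  obtain ⟨a, t, rfl⟩ : ∃ a t, l = a :: t := by
    cases l with
    | nil => exact absurd rfl h.ne
    | cons a t => exact ⟨a, t, rfl⟩
  have ha : a = (0,1) := by simpa using h.head
  subst ha
  obtain ⟨b, t', rfl⟩ : ∃ b t', t = b :: t' := by
    cases t with
    | nil => exact absurd rfl (tail_ne _ h)
    | cons b t' => exact ⟨b, t', rfl⟩
  have hadj : gridAdj 2 (0,1) b := (List.isChain_cons.1 h.chain).1 _ (by simp)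
  obtain ⟨-, h2, h3⟩ := adj_cases hadj
  obtain ⟨c, d⟩ := b
  simp only [Prod.mk.injEq] at h3 ⊢
  simp only [List.tail_cons, List.head?_cons, Option.some.injEq, Prod.mk.injEq]
  omega

/-- vertices in the tail of a GSAW other than (0,0) have positive column -/
lemma tail_col_pos (l : List V) (h : IsGSAW 2 l) {v : V} (hv : v ∈ l.tail)
    (hv0 : v ≠ (0,0)) : 1 ≤ v.1 := by
  obtain ⟨a, t, rfl⟩ : ∃ a t, l = a :: t := by
    cases l with
    | nil => exact absurd rfl h.ne
    | cons a t => exact ⟨a, t, rfl⟩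
  have ha : a = (0,1) := by simpa using h.head
  have h1 : v ≠ (0,1) := by
    rintro rfl
    exact (List.nodup_cons.1 h.nodup).1 (ha ▸ hv)
  have h2 : v.2 < 2 := h.mem_grid _ (List.mem_cons_of_mem _ hv)
  obtain ⟨x, y⟩ := v
  simp only [ne_eq, Prod.mk.injEq, Prod.fst, Prod.snd] at h1 hv0 h2 ⊢
  omega


/-! ### The hook walks -/

def hook : ℕ → List V
  | 0 => [(0,1),(0,0)]
  | (m+1) => (0,1) :: ((hook m).map up ++ [(0,0)])

lemma hook_ne (m : ℕ) : hook m ≠ [] := by cases m <;> simp [hook]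

lemma hook_length (m : ℕ) : (hook m).length = 2*m + 2 := by
  induction m with
  | zero => simp [hook]
  | succ k ih => simp [hook, ih]; omega

lemma hook_head (m : ℕ) : (hook m).head? = some (0,1) := by cases m <;> simp [hook]

lemma zz_mem_hook (m : ℕ) : ((0:ℕ),(0:ℕ)) ∈ hook m := by cases m <;> simp [hook]

lemma oo_mem_hook (m : ℕ) (hm : 1 ≤ m) : ((1:ℕ),(0:ℕ)) ∈ hook m := by
  obtain ⟨k, rfl⟩ := Nat.exists_eq_add_of_le' hm
  have : ((1:ℕ),(0:ℕ)) = up (0,0) := rfl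
  simp only [hook, List.mem_cons, List.mem_append, List.mem_map]
  exact Or.inr (Or.inl ⟨(0,0), zz_mem_hook k, rfl⟩)

lemma hook_getLast? (m : ℕ) : (hook m).getLast? = some (0,0) := by
  cases m with
  | zero => simp [hook]
  | succ k =>
    show ((0,1) :: ((hook k).map up ++ [(0,0)])).getLast? = some (0,0)
    rw [show (0,1) :: ((hook k).map up ++ [(0,0)]) = ((0,1) :: (hook k).map up) ++ [(0,0)] from rfl,
      List.getLast?_concat]

lemma hook_grid (m : ℕ) : ∀ v ∈ hook m, v.2 < 2 := by
  induction m with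
  | zero => simp [hook]
  | succ k ih =>
    intro v hv
    simp only [hook, List.mem_cons, List.mem_append, List.mem_map] at hv
    rcases hv with rfl | ⟨⟨u, hu, rfl⟩ | h⟩
    · norm_num
    · simpa [up] using ih u hu
    · simp at h; subst h; norm_num

lemma hook_col (m : ℕ) : ∀ v ∈ hook m, v.1 ≤ m := by
  induction m with
  | zero => simp [hook]
  | succ k ih =>
    intro v hv
    simp only [hook, List.mem_cons, List.mem_append, List.mem_map] at hv
    rcases hv with rfl | ⟨⟨u, hu, rfl⟩ | h⟩
    · simp
    · simpa [up] using Nat.succ_le_succ (ih u hu)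
    · simp at h; subst h; simp

lemma hook_nodup (m : ℕ) : (hook m).Nodup := by
  induction m with
  | zero => simp [hook]
  | succ k ih =>
    simp only [hook, List.nodup_cons, List.nodup_append, List.mem_append, List.mem_map]
    refine ⟨?_, (ih.map up_inj), by simp, ?_⟩
    · rintro (⟨u, hu, hu2⟩ | h)
      · have : (up u).1 = u.1 + 1 := rfl
        rw [hu2] at this; simp at this
      · simp [Prod.ext_iff] at h
    · intro a ha
      obtain ⟨u, hu, rfl⟩ := ha
      intro b hb hcon
      simp only [List.mem_singleton] at hb
      subst hb
      have : (up u).1 = u.1 + 1 := rfl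
      rw [hcon] at this; simp at this

lemma hook_chain (m : ℕ) : (hook m).Chain' (gridAdj 2) := by
  induction m with
  | zero => simp [hook, List.Chain', List.isChain_cons_cons]; exact adj01
  | succ k ih =>
    simp only [hook]
    rw [List.Chain', List.isChain_cons]
    constructor
    · intro y hy
      obtain ⟨a, b⟩ := y
      rw [List.head?_append, List.head?_map, hook_head k] at hy
      simp [up, Prod.ext_iff, Option.mem_def] at hy
      obtain ⟨rfl, rfl⟩ := hy
      exact adj0011
    · rw [List.isChain_append]
      refine ⟨(List.isChain_map up).2 (ih.imp fun a b h => adj_up.2 h), by simp, ?_⟩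
      intro x hx y hy
      obtain ⟨a, b⟩ := x; obtain ⟨c, d⟩ := y
      rw [List.getLast?_map, hook_getLast?] at hx
      simp [up, Prod.ext_iff, Option.mem_def] at hx hy
      obtain ⟨rfl, rfl⟩ := hx
      obtain ⟨rfl, rfl⟩ := hy
      simp [adj_def]

lemma hook_getLast (m : ℕ) (h : hook m ≠ []) : (hook m).getLast h = (0,0) := by
  have := hook_getLast? m
  rw [List.getLast?_eq_getLast h] at this
  exact Option.some.inj this

lemma hook_gsaw (m : ℕ) (hm : 1 ≤ m) : IsGSAW 2 (hook m) := by
  refine ⟨hook_ne m, hook_head m, hook_grid m, hook_nodup m, hook_chain m, ?_⟩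
  intro w hw
  rw [hook_getLast] at hw
  obtain ⟨-, h2, h3⟩ := adj_cases hw
  obtain ⟨x, y⟩ := w
  simp only [Prod.mk.injEq, Prod.fst, Prod.snd] at h2 h3
  have : (x = 1 ∧ y = 0) ∨ (x = 0 ∧ y = 1) := by omega
  rcases this with ⟨rfl, rfl⟩ | ⟨rfl, rfl⟩
  · exact oo_mem_hook m hm
  · cases m with
    | zero => exact absurd hm (by norm_num)
    | succ k => simp [hook]

lemma hook_tail_head (m : ℕ) (hm : 1 ≤ m) : (hook m).tail.head? = some (1,1) := by
  obtain ⟨k, rfl⟩ := Nat.exists_eq_add_of_le' hm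
  show ((hook k).map up ++ [(0,0)]).head? = some (1,1)
  rw [List.head?_append, List.head?_map, hook_head]
  rfl

lemma hook_mem_S (m : ℕ) (hm : 1 ≤ m) : hook m ∈ S (2*m+1) := by
  exact ⟨hook_gsaw m hm, by rw [hook_length]⟩


/-! ### Uniqueness: paths from (0,1) to (0,0) through (1,1) are hooks -/

lemma hook_unique_aux : ∀ (N : ℕ) (mid : List V), mid.length ≤ N →
    (((1,1) :: mid) ++ [((0:ℕ),(0:ℕ))]).Chain' (gridAdj 2) →
    ((0,1) :: (((1,1) :: mid) ++ [((0:ℕ),(0:ℕ))])).Nodup →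
    (∀ v ∈ mid, v.2 < 2) →
    ∃ m, 1 ≤ m ∧ (0,1) :: (((1,1) :: mid) ++ [((0:ℕ),(0:ℕ))]) = hook m := by
  intro N
  induction N with
  | zero =>
    intro mid hN hchain hnodup hgrid
    rw [List.length_eq_zero_iff.1 (Nat.le_zero.1 hN)] at hchain
    have : gridAdj 2 (1,1) (0,0) := (List.isChain_cons_cons.1 hchain).1
    simp [adj_def] at this
  | succ N ih =>
    intro mid hN hchain hnodup hgrid
    -- positive columns in (1,1) :: mid
    have hcol : ∀ v ∈ (1,1) :: mid, 1 ≤ v.1 ∧ v.2 < 2 := by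
      intro v hv
      have hvg : v.2 < 2 := by
        rcases List.mem_cons.1 hv with rfl | h
        · norm_num
        · exact hgrid _ h
      have hv01 : v ≠ (0,1) := by
        intro hcon
        exact (List.nodup_cons.1 hnodup).1 (List.mem_append_left _ (hcon ▸ hv))
      have hv00 : v ≠ (0,0) := by
        intro hcon
        have hdisj := (List.nodup_append.1 (List.nodup_cons.1 hnodup).2).2.2
        exact hdisj _ hv _ (by simp) hcon
      obtain ⟨a, b⟩ := v
      simp only [ne_eq, Prod.mk.injEq, Prod.fst, Prod.snd] at hvg hv01 hv00 ⊢
      omega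
    obtain ⟨hchain₂, -, hlink⟩ := List.isChain_append.1 hchain
    -- last of (1,1)::mid is (1,0)
    have hL2 : ((1,1) :: mid).getLast (by simp) = (1,0) := by
      have hadj : gridAdj 2 (((1,1) :: mid).getLast (by simp)) (0,0) := by
        apply hlink
        · rw [List.getLast?_eq_getLast (by simp)]; simp
        · simp
      have hmem := List.getLast_mem (l := (1,1) :: mid) (by simp)
      have hc := hcol _ hmem
      obtain ⟨hb2, -, hcases⟩ := adj_cases hadj
      rw [Prod.ext_iff]
      simp only [Prod.mk.injEq, Prod.fst, Prod.snd] at hcases hc ⊢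
      omega
    match mid with
    | [] => simp [Prod.ext_iff] at hL2
    | w :: mid' =>
    have hadjw : gridAdj 2 (1,1) w := (List.isChain_cons_cons.1 hchain₂).1
    have hwcol := hcol w (by simp)
    have hw : w = (2,1) ∨ w = (1,0) := by
      obtain ⟨-, -, hcases⟩ := adj_cases hadjw
      obtain ⟨a, b⟩ := w
      simp only [Prod.mk.injEq, Prod.fst, Prod.snd] at hcases hwcol ⊢
      omega
    rcases hw with rfl | rfl
    · -- w = (2,1): mid' ends with (1,0); shift down and induct
      have hmne : mid' ≠ [] := by
        rintro rfl
        simp [Prod.ext_iff] at hL2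
      obtain ⟨mid₀, rfl⟩ : ∃ mid₀, mid' = mid₀ ++ [((1:ℕ),(0:ℕ))] := by
        refine List.getLast?_eq_some_iff.1 ?_
        rw [List.getLast?_eq_getLast hmne]
        rw [List.getLast_cons (by simp), List.getLast_cons hmne] at hL2
        rw [hL2]
      have hmap : mid₀.map (up ∘ dn) = mid₀ := by
        have : mid₀.map (up ∘ dn) = mid₀.map id := by
          apply List.map_congr_left
          intro a ha
          have hc := (hcol a (by simp [ha])).1
          obtain ⟨a1, a2⟩ := a
          simp [Function.comp, up, dn, Prod.ext_iff] at hc ⊢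
          omega
        rw [this, List.map_id]
      have hts : (1,1) :: (2,1) :: (mid₀ ++ [((1:ℕ),(0:ℕ))]) =
          ((0,1) :: (((1,1) :: mid₀.map dn) ++ [((0:ℕ),(0:ℕ))])).map up := by
        simp only [List.map_cons, List.map_append, List.map_map, List.map_cons,
          List.map_singleton, hmap]
        rfl
      have hschain : ((0,1) :: (((1,1) :: mid₀.map dn) ++ [((0:ℕ),(0:ℕ))])).Chain' (gridAdj 2) :=
        ((List.isChain_map up).1 (hts ▸ hchain₂)).imp (fun a b h => adj_up.1 h)
      have hsnodup : ((0,1) :: (((1,1) :: mid₀.map dn) ++ [((0:ℕ),(0:ℕ))])).Nodup := by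
        have h1 : ((1,1) :: (2,1) :: (mid₀ ++ [((1:ℕ),(0:ℕ))])).Nodup :=
          (List.nodup_append.1 (List.nodup_cons.1 hnodup).2).1
        rw [hts] at h1
        exact h1.of_map up
      obtain ⟨m, hm, hsm⟩ := ih (mid₀.map dn)
        (by simp only [List.length_map]; simp at hN; omega)
        (List.isChain_cons.1 hschain).2
        hsnodup
        (by
          intro v hv
          simp only [List.mem_map] at hv
          obtain ⟨u, hu, rfl⟩ := hv
          exact (hcol u (by simp [hu])).2)
      refine ⟨m + 1, by omega, ?_⟩
      show (0,1) :: (((1,1) :: (2,1) :: (mid₀ ++ [((1:ℕ),(0:ℕ))])) ++ [((0:ℕ),(0:ℕ))]) = hook (m+1)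
      rw [hts, hsm]
      rfl
    · -- w = (1,0): mid' = [] and the list is hook 1
      have hmid' : mid' = [] := by
        by_contra hne
        rw [List.getLast_cons (by simp), List.getLast_cons hne] at hL2
        have hnd : ((1,0) :: mid').Nodup :=
          (List.nodup_cons.1 (List.nodup_append.1 (List.nodup_cons.1 hnodup).2).1).2
        exact (List.nodup_cons.1 hnd).1 (hL2 ▸ List.getLast_mem hne)
      subst hmid'
      exact ⟨1, le_refl 1, rfl⟩

/-- every GSAW containing (0,0) as last vertex whose second vertex is (1,1) is a hook -/
lemma gsaw_hook (l : List V) (h : IsGSAW 2 l) (h2 : l.tail.head? = some (1,1))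
    (hlast : l.getLast? = some (0,0)) : ∃ m, 1 ≤ m ∧ l = hook m := by
  obtain ⟨init, hinit⟩ := List.getLast?_eq_some_iff.1 hlast
  have hhead := h.head
  match init, hinit with
  | [], hinit => rw [hinit] at hhead; simp [Prod.ext_iff] at hhead
  | [x], hinit =>
    rw [hinit] at h2
    simp [Prod.ext_iff] at h2
  | x :: y :: mid, hinit =>
    have hx : x = (0,1) := by rw [hinit] at hhead; simpa using hhead
    have hy : y = (1,1) := by rw [hinit] at h2; simpa using h2
    subst hx; subst hy
    have hform : (0,1) :: (1,1) :: mid ++ [((0:ℕ),(0:ℕ))] =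
        (0,1) :: (((1,1) :: mid) ++ [((0:ℕ),(0:ℕ))]) := by simp
    rw [hinit, hform]
    have hchain := h.chain
    have hnodup := h.nodup
    rw [hinit, hform] at hchain hnodup
    exact hook_unique_aux mid.length mid (le_refl _)
      (List.isChain_cons.1 hchain).2 hnodup
      (fun v hv => h.mem_grid v (by rw [hinit]; simp [hv]))


/-! ### helpers -/

lemma chain'_imp_mem {α : Type*} {R S : α → α → Prop} {l : List α}
    (h : ∀ a ∈ l, ∀ b ∈ l, R a b → S a b) (hc : l.Chain' R) : l.Chain' S := by
  induction l with
  | nil => exact List.isChain_nil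
  | cons a t ih =>
    rw [List.Chain', List.isChain_cons] at hc ⊢
    refine ⟨fun y hy => h a (by simp) y (List.mem_cons_of_mem _ (List.mem_of_mem_head? hy))
        (hc.1 y hy),
      ih (fun x hx y hy hr => h x (by simp [hx]) y (by simp [hy]) hr) hc.2⟩

lemma fl_gl {p : V} (h1 : 1 ≤ p.1) (h2 : p.2 < 2) : fl (gl p) = p := by
  obtain ⟨a, b⟩ := p
  simp [fl, gl, Prod.ext_iff] at *
  omega

lemma gl_fl {p : V} (h2 : p.2 < 2) : gl (fl p) = p := by
  obtain ⟨a, b⟩ := p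
  simp [fl, gl, Prod.ext_iff] at *
  omega

lemma up_dn {p : V} (h1 : 1 ≤ p.1) : up (dn p) = p := by
  obtain ⟨a, b⟩ := p
  simp [up, dn, Prod.ext_iff] at *
  omega

lemma gsaw_getLast_grid (l : List V) (h : IsGSAW 2 l) : (l.getLast h.ne).2 < 2 :=
  h.mem_grid _ (List.getLast_mem h.ne)

lemma gsaw_getLast_ne_head (l : List V) (h : IsGSAW 2 l) : l.getLast h.ne ≠ (0,1) := by
  obtain ⟨a, t, rfl⟩ : ∃ a t, l = a :: t := by
    cases l with
    | nil => exact absurd rfl h.ne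
    | cons a t => exact ⟨a, t, rfl⟩
  have ha : a = (0,1) := by simpa using h.head
  have htne : t ≠ [] := by simpa using tail_ne _ h
  rw [List.getLast_cons htne]
  intro hcon
  exact (List.nodup_cons.1 h.nodup).1 (ha ▸ hcon ▸ List.getLast_mem htne)

lemma gsaw_getLast_mem_tail (l : List V) (h : IsGSAW 2 l) : l.getLast h.ne ∈ l.tail := by
  obtain ⟨a, t, rfl⟩ : ∃ a t, l = a :: t := by
    cases l with
    | nil => exact absurd rfl h.ne
    | cons a t => exact ⟨a, t, rfl⟩
  have htne : t ≠ [] := by simpa using tail_ne _ h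
  rw [List.getLast_cons htne]
  exact List.getLast_mem htne

/-! ### the three classes -/

def X1 (n : ℕ) : Set (List V) := {l | l ∈ S n ∧ l.tail.head? = some (1,1) ∧ (0,0) ∉ l}
def X2 (n : ℕ) : Set (List V) := {l | l ∈ S n ∧ l.tail.head? = some (0,0)}
def X3 (n : ℕ) : Set (List V) := {l | l ∈ S n ∧ l.tail.head? = some (1,1) ∧ ((0:ℕ),(0:ℕ)) ∈ l}
def Cs (n : ℕ) : Set (List V) := {l | l ∈ S n ∧ l.getLast? ≠ some (0,0)}

def F1 (l : List V) : List V := (0,1) :: l.map up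
def F2 (l : List V) : List V := (0,1) :: (0,0) :: l.map fl

/-! ### the bijection F2 : S n ≃ X2 (n+2) -/

lemma F2_mapsTo (n : ℕ) : Set.MapsTo F2 (S n) (X2 (n+2)) := by
  rintro l ⟨hG, hlen⟩
  have hne : l ≠ [] := hG.ne
  have hmapne : l.map fl ≠ [] := by simpa using hne
  refine ⟨⟨?_, ?_⟩, ?_⟩
  · constructor
    case ne => simp [F2]
    case head => simp [F2]
    case mem_grid =>
      intro v hv
      simp only [F2, List.mem_cons, List.mem_map] at hv
      rcases hv with rfl | rfl | ⟨u, hu, rfl⟩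
      · norm_num
      · norm_num
      · show 1 - u.2 < 2; omega
    case nodup =>
      simp only [F2, List.nodup_cons, List.mem_cons, List.mem_map]
      refine ⟨?_, ?_, ?_⟩
      · push_neg
        refine ⟨by simp [Prod.ext_iff], ?_⟩
        rintro u hu hcon
        have : (fl u).1 = u.1 + 1 := rfl
        rw [hcon] at this; simp at this
      · push_neg
        rintro u hu hcon
        have : (fl u).1 = u.1 + 1 := rfl
        rw [hcon] at this; simp at this
      · refine hG.nodup.map_on ?_
        intro p hp q hq hpq
        have h1 := hG.mem_grid p hp
        have h2 := hG.mem_grid q hq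
        obtain ⟨p1, p2⟩ := p; obtain ⟨q1, q2⟩ := q
        simp only [fl, Prod.mk.injEq, Prod.fst, Prod.snd] at *
        omega
    case chain =>
      simp only [F2]
      rw [List.Chain', List.isChain_cons]
      refine ⟨by rintro y hy; simp at hy; rw [← hy]; exact adj01, ?_⟩
      rw [List.isChain_cons]
      constructor
      · intro y hy
        rw [List.head?_map, hG.head] at hy
        simp only [Option.mem_def, Option.map_some] at hy
        have hyv : y = fl (0, 2-1) := (Option.some.inj hy).symm
        rw [hyv]
        show gridAdj 2 (0,0) (1,0)
        simp [adj_def]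
      · exact (List.isChain_map fl).2 (hG.chain.imp (fun _ _ h => adj_fl h))
    case trapped =>
      intro z hz
      have hgl : (F2 l).getLast (by simp [F2]) = fl (l.getLast hne) := by
        simp only [F2]
        rw [List.getLast_cons (by simp [hmapne]), List.getLast_cons hmapne,
          List.getLast_map]
      rw [hgl] at hz
      obtain ⟨hL2, hz2, hcases⟩ := adj_cases hz
      by_cases hz1 : z.1 = 0
      · -- z is (0,0) or (0,1), both in F2 l
        have : z = (0,0) ∨ z = (0,1) := by
          obtain ⟨a, b⟩ := z
          simp only [Prod.mk.injEq, Prod.fst, Prod.snd] at *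
          omega
        rcases this with rfl | rfl <;> simp [F2]
      · -- z = fl (gl z) with gl z a neighbor of the last vertex of l
        have hzgrid : (gl z).2 < 2 := by show 1 - z.2 < 2; omega
        have hfg : fl (gl z) = z := fl_gl (by omega) hz2
        have hadj : gridAdj 2 (l.getLast hne) (gl z) := by
          refine adj_fl_rev (gsaw_getLast_grid l hG) hzgrid ?_
          rw [hfg]
          exact hz
        have hmem := hG.trapped _ hadj
        simp only [F2, List.mem_cons, List.mem_map]
        exact Or.inr (Or.inr ⟨gl z, hmem, hfg⟩)
  · simp [F2, hlen]
  · simp [F2]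

lemma F2_injOn (n : ℕ) : Set.InjOn F2 (S n) := by
  rintro l ⟨hG, -⟩ l' ⟨hG', -⟩ heq
  have h : l.map fl = l'.map fl := by
    simpa [F2] using heq
  have key : ∀ (a : List V), (∀ v ∈ a, v.2 < 2) → (a.map fl).map gl = a := by
    intro a ha
    rw [List.map_map]
    have : a.map (gl ∘ fl) = a.map id := by
      apply List.map_congr_left
      intro p hp
      simp only [Function.comp_apply, id_eq]
      exact gl_fl (ha p hp)
    rw [this, List.map_id]
  calc l = (l.map fl).map gl := (key l hG.mem_grid).symm
    _ = (l'.map fl).map gl := by rw [h]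
    _ = l' := key l' hG'.mem_grid

lemma F2_surjOn (n : ℕ) : Set.SurjOn F2 (S n) (X2 (n+2)) := by
  rintro w ⟨⟨hG, hlen⟩, h2nd⟩
  obtain ⟨a, t₁, rfl⟩ : ∃ a t₁, w = a :: t₁ := by
    cases w with
    | nil => exact absurd rfl hG.ne
    | cons a t => exact ⟨a, t, rfl⟩
  have ha : a = (0,1) := by simpa using hG.head
  subst ha
  obtain ⟨b, t, rfl⟩ : ∃ b t, t₁ = b :: t := by
    cases t₁ with
    | nil => simp at h2nd
    | cons b t => exact ⟨b, t, rfl⟩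
  have hb : b = (0,0) := by simpa using h2nd
  subst hb
  -- t is nonempty
  have htne : t ≠ [] := by
    rintro rfl
    have h10 := hG.trapped (1,0) (by
      have he : ([((0:ℕ),(1:ℕ)), ((0:ℕ),(0:ℕ))] : List V).getLast hG.ne = (0,0) := rfl
      rw [he]
      simp [adj_def])
    simp [Prod.ext_iff] at h10
  -- elements of t have positive column and small row
  have hcol : ∀ v ∈ t, 1 ≤ v.1 ∧ v.2 < 2 := by
    intro v hv
    have hgrid := hG.mem_grid v (by simp [hv])
    have h00 : v ≠ (0,0) :=
      fun hcon => (List.nodup_cons.1 (List.nodup_cons.1 hG.nodup).2).1 (hcon ▸ hv)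
    have h01 : v ≠ (0,1) := by
      intro hcon; subst hcon
      exact (List.nodup_cons.1 hG.nodup).1 (by simp [hv])
    obtain ⟨a, b⟩ := v
    simp only [ne_eq, Prod.mk.injEq, Prod.fst, Prod.snd] at *
    omega
  have hkey : (t.map gl).map fl = t := by
    rw [List.map_map]
    have : t.map (fl ∘ gl) = t.map id :=
      List.map_congr_left (fun p hp => by
        simp only [Function.comp_apply, id_eq]
        exact fl_gl (hcol p hp).1 (hcol p hp).2)
    rw [this, List.map_id]
  set s : List V := t.map gl with hs
  have hsne : s ≠ [] := by simpa [hs] using htne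
  have hwlast : ((0,1) :: (0,0) :: t).getLast hG.ne = t.getLast htne := by
    rw [List.getLast_cons (by simp [htne]), List.getLast_cons htne]
  refine ⟨s, ⟨⟨?_, ?_, ?_, ?_, ?_, ?_⟩, ?_⟩, ?_⟩
  · exact hsne
  · -- head
    have hchain := hG.chain
    rw [List.Chain', List.isChain_cons, List.isChain_cons] at hchain
    obtain ⟨hc, hcc⟩ := hchain.2
    obtain ⟨c, t', rfl⟩ : ∃ c t', t = c :: t' := by
      cases t with
      | nil => exact absurd rfl htne
      | cons c t' => exact ⟨c, t', rfl⟩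
    have hadjc : gridAdj 2 (0,0) c := hc c (by simp)
    have hc01 : c ≠ (0,1) := by
      intro hcon; subst hcon
      exact (List.nodup_cons.1 hG.nodup).1 (by simp)
    have hcval : c = (1,0) := by
      obtain ⟨-, hcg, hcases⟩ := adj_cases hadjc
      obtain ⟨c1, c2⟩ := c
      simp only [ne_eq, Prod.mk.injEq, Prod.fst, Prod.snd] at *
      omega
    subst hcval
    simp [hs, gl]
  · intro v hv
    simp only [hs, List.mem_map] at hv
    obtain ⟨u, hu, rfl⟩ := hv
    show 1 - u.2 < 2; omega
  · -- nodup
    refine ((List.nodup_cons.1 (List.nodup_cons.1 hG.nodup).2).2).map_on ?_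
    intro p hp q hq hpq
    have h1 := hcol p hp
    have h2 := hcol q hq
    obtain ⟨p1, p2⟩ := p; obtain ⟨q1, q2⟩ := q
    simp only [gl, Prod.mk.injEq, Prod.fst, Prod.snd] at *
    omega
  · -- chain
    have hchaint : t.Chain' (gridAdj 2) :=
      (List.isChain_cons.1 (List.isChain_cons.1 hG.chain).2).2
    have : (s.map fl).Chain' (gridAdj 2) := by rw [hs, hkey]; exact hchaint
    refine chain'_imp_mem (S := gridAdj 2) ?_ ((List.isChain_map fl).1 this)
    intro x hx y hy hr
    refine adj_fl_rev ?_ ?_ hr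
    · simp only [hs, List.mem_map] at hx
      obtain ⟨u, hu, rfl⟩ := hx
      show 1 - u.2 < 2; omega
    · simp only [hs, List.mem_map] at hy
      obtain ⟨u, hu, rfl⟩ := hy
      show 1 - u.2 < 2; omega
  · -- trapped
    intro z hz
    have hslast : s.getLast hsne = gl (t.getLast htne) := List.getLast_map (f := gl) (l := t) hsne
    rw [hslast] at hz
    have hLcol := hcol _ (List.getLast_mem htne)
    have hz2 : z.2 < 2 := (adj_cases hz).2.1
    have hadj : gridAdj 2 (t.getLast htne) (fl z) := by
      have := adj_fl hz
      rwa [fl_gl hLcol.1 hLcol.2] at this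
    have hmem : fl z ∈ (0,1) :: (0,0) :: t := by
      refine hG.trapped _ ?_
      rwa [hwlast]
    have hflcol : (fl z).1 = z.1 + 1 := rfl
    rcases List.mem_cons.1 hmem with hcon | hmem'
    · rw [hcon] at hflcol; simp at hflcol
    rcases List.mem_cons.1 hmem' with hcon | hmem''
    · rw [hcon] at hflcol; simp at hflcol
    · rw [hs]
      simp only [List.mem_map]
      exact ⟨fl z, hmem'', gl_fl hz2⟩
  · -- length
    have : ((0,1) :: (0,0) :: t).length = n + 2 + 1 := hlen
    simp only [hs, List.length_map]
    simp at this
    omega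
  · -- F2 s = w
    simp only [F2, ← hs, hkey]

lemma F2_bijOn (n : ℕ) : Set.BijOn F2 (S n) (X2 (n+2)) :=
  ⟨F2_mapsTo n, F2_injOn n, F2_surjOn n⟩


/-! ### the bijection F1 : Cs n ≃ X1 (n+1) -/

lemma dn_up (p : V) : dn (up p) = p := by
  obtain ⟨a, b⟩ := p
  simp [up, dn]

lemma F1_mapsTo (n : ℕ) : Set.MapsTo F1 (Cs n) (X1 (n+1)) := by
  rintro l ⟨⟨hG, hlen⟩, hlast⟩
  have hne : l ≠ [] := hG.ne
  have hmapne : l.map up ≠ [] := by simpa using hne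
  have hLcol : 1 ≤ (l.getLast hne).1 := by
    have h1 : l.getLast hne ≠ (0,0) := by
      intro hcon
      exact hlast (by rw [List.getLast?_eq_getLast hne, hcon])
    have h2 := gsaw_getLast_ne_head l hG
    have h3 := gsaw_getLast_grid l hG
    rcases hLe : l.getLast hne with ⟨a, b⟩
    rw [hLe] at h1 h2 h3
    simp only [ne_eq, Prod.mk.injEq, Prod.fst, Prod.snd] at h1 h2 h3 ⊢
    omega
  refine ⟨⟨?_, ?_⟩, ?_, ?_⟩
  · constructor
    case ne => simp [F1]
    case head => simp [F1]
    case mem_grid =>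
      intro v hv
      simp only [F1, List.mem_cons, List.mem_map] at hv
      rcases hv with rfl | ⟨u, hu, rfl⟩
      · norm_num
      · exact hG.mem_grid u hu
    case nodup =>
      simp only [F1, List.nodup_cons, List.mem_map]
      constructor
      · rintro ⟨u, hu, hcon⟩
        have : (up u).1 = u.1 + 1 := rfl
        rw [hcon] at this; simp at this
      · exact hG.nodup.map up_inj
    case chain =>
      simp only [F1]
      rw [List.Chain', List.isChain_cons]
      constructor
      · intro y hy
        rw [List.head?_map, hG.head] at hy
        simp only [Option.mem_def, Option.map_some] at hy
        have hyv : y = up (0, 2-1) := (Option.some.inj hy).symm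
        rw [hyv]
        show gridAdj 2 (0,1) (1,1)
        exact adj0011
      · exact (List.isChain_map up).2 (hG.chain.imp (fun _ _ h => adj_up.2 h))
    case trapped =>
      intro z hz
      have hgl : (F1 l).getLast (by simp [F1]) = up (l.getLast hne) := by
        simp only [F1]
        rw [List.getLast_cons hmapne, List.getLast_map]
      rw [hgl] at hz
      have hzcol : 1 ≤ z.1 := by
        obtain ⟨-, -, hcases⟩ := adj_cases hz
        obtain ⟨a, b⟩ := z
        have : (up (l.getLast hne)).1 = (l.getLast hne).1 + 1 := rfl
        simp only [Prod.mk.injEq, Prod.fst, Prod.snd] at *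
        omega
      have hud : up (dn z) = z := up_dn hzcol
      have hadj : gridAdj 2 (l.getLast hne) (dn z) := adj_up.1 (by rwa [hud])
      have hmem := hG.trapped _ hadj
      simp only [F1, List.mem_cons, List.mem_map]
      exact Or.inr ⟨dn z, hmem, hud⟩
  · simp [F1, hlen]
  · simp only [F1, List.tail_cons, List.head?_map, hG.head]
    rfl
  · simp only [F1, List.mem_cons, List.mem_map]
    push_neg
    constructor
    · simp [Prod.ext_iff]
    · rintro u hu hcon
      have : (up u).1 = u.1 + 1 := rfl
      rw [hcon] at this; simp at this

lemma F1_injOn (n : ℕ) : Set.InjOn F1 (Cs n) := by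
  rintro l - l' - heq
  have h : l.map up = l'.map up := by simpa [F1] using heq
  exact List.map_injective_iff.2 up_inj h

lemma F1_surjOn (n : ℕ) : Set.SurjOn F1 (Cs n) (X1 (n+1)) := by
  rintro w ⟨⟨hG, hlen⟩, h2nd, h00⟩
  obtain ⟨a, t, rfl⟩ : ∃ a t, w = a :: t := by
    cases w with
    | nil => exact absurd rfl hG.ne
    | cons a t => exact ⟨a, t, rfl⟩
  have ha : a = (0,1) := by simpa using hG.head
  subst ha
  have htne : t ≠ [] := by
    rintro rfl
    simp at h2nd
  -- elements of t have positive column and small row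
  have hcol : ∀ v ∈ t, 1 ≤ v.1 ∧ v.2 < 2 := by
    intro v hv
    have hgrid := hG.mem_grid v (by simp [hv])
    have hv00 : v ≠ (0,0) := by
      intro hcon; subst hcon
      exact h00 (List.mem_cons_of_mem _ hv)
    have hv01 : v ≠ (0,1) := by
      intro hcon; subst hcon
      exact (List.nodup_cons.1 hG.nodup).1 hv
    obtain ⟨a, b⟩ := v
    simp only [ne_eq, Prod.mk.injEq, Prod.fst, Prod.snd] at *
    omega
  have hkey : (t.map dn).map up = t := by
    rw [List.map_map]
    have : t.map (up ∘ dn) = t.map id := by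
      apply List.map_congr_left
      intro p hp
      simp only [Function.comp_apply, id_eq]
      exact up_dn (hcol p hp).1
    rw [this, List.map_id]
  set s : List V := t.map dn with hs
  have hsne : s ≠ [] := by simpa [hs] using htne
  have hwlast : ((0,1) :: t).getLast hG.ne = t.getLast htne := List.getLast_cons htne
  have hLmem := List.getLast_mem htne
  have hLcol := hcol _ hLmem
  have hslast : s.getLast hsne = dn (t.getLast htne) := List.getLast_map (f := dn) (l := t) hsne
  refine ⟨s, ⟨⟨⟨?_, ?_, ?_, ?_, ?_, ?_⟩, ?_⟩, ?_⟩, ?_⟩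
  · exact hsne
  · -- head
    obtain ⟨c, t', rfl⟩ : ∃ c t', t = c :: t' := by
      cases t with
      | nil => exact absurd rfl htne
      | cons c t' => exact ⟨c, t', rfl⟩
    have hc : c = (1,1) := by simpa using h2nd
    subst hc
    simp [hs, dn]
  · intro v hv
    simp only [hs, List.mem_map] at hv
    obtain ⟨u, hu, rfl⟩ := hv
    exact hG.mem_grid u (by simp [hu])
  · -- nodup
    refine ((List.nodup_cons.1 hG.nodup).2).map_on ?_
    intro p hp q hq hpq
    have h1 := hcol p hp
    have h2 := hcol q hq
    obtain ⟨p1, p2⟩ := p; obtain ⟨q1, q2⟩ := q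
    simp only [dn, Prod.mk.injEq, Prod.fst, Prod.snd] at *
    omega
  · -- chain
    have hchaint : t.Chain' (gridAdj 2) := (List.isChain_cons.1 hG.chain).2
    have : (s.map up).Chain' (gridAdj 2) := by rw [hs, hkey]; exact hchaint
    exact ((List.isChain_map up).1 this).imp (fun _ _ h => adj_up.1 h)
  · -- trapped
    intro z hz
    rw [hslast] at hz
    have hadj : gridAdj 2 (t.getLast htne) (up z) := by
      have := adj_up.2 hz
      rwa [up_dn hLcol.1] at this
    have hmem : up z ∈ (0,1) :: t := by
      refine hG.trapped _ ?_
      rwa [hwlast]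
    have hupcol : (up z).1 = z.1 + 1 := rfl
    rcases List.mem_cons.1 hmem with hcon | hmem'
    · rw [hcon] at hupcol; simp at hupcol
    · rw [hs]
      simp only [List.mem_map]
      exact ⟨up z, hmem', dn_up z⟩
  · -- length
    have : ((0,1) :: t).length = n + 1 + 1 := hlen
    simp only [hs, List.length_map]
    simp at this
    omega
  · -- getLast? s ≠ some (0,0)
    rw [List.getLast?_eq_getLast hsne, hslast]
    intro hcon
    have hL10 : t.getLast htne = (1,0) := by
      have hc := Option.some.inj hcon
      rcases hLe : t.getLast htne with ⟨a, b⟩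
      rw [hLe] at hc hLcol
      simp only [dn, Prod.mk.injEq, Prod.fst, Prod.snd] at hc hLcol ⊢
      omega
    have : ((0:ℕ),(0:ℕ)) ∈ (0,1) :: t := by
      refine hG.trapped _ ?_
      rw [hwlast, hL10]
      simp [adj_def]
    exact h00 this
  · -- F1 s = w
    simp only [F1, ← hs, hkey]

lemma F1_bijOn (n : ℕ) : Set.BijOn F1 (Cs n) (X1 (n+1)) :=
  ⟨F1_mapsTo n, F1_injOn n, F1_surjOn n⟩


/-! ### partition and classification -/

lemma S_partition (n : ℕ) : S n = X1 n ∪ X2 n ∪ X3 n := by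
  ext l
  constructor
  · intro hl
    rcases second_vertex l hl.1 with h | h
    · by_cases h00 : ((0:ℕ),(0:ℕ)) ∈ l
      · exact Or.inr ⟨hl, h, h00⟩
      · exact Or.inl (Or.inl ⟨hl, h, h00⟩)
    · exact Or.inl (Or.inr ⟨hl, h⟩)
  · rintro ((⟨h,-⟩ | ⟨h,-⟩) | ⟨h,-⟩) <;> exact h

lemma disj12 (n : ℕ) : Disjoint (X1 n) (X2 n) := by
  rw [Set.disjoint_left]
  rintro l ⟨-, h1, -⟩ ⟨-, h2⟩
  rw [h1] at h2
  simp [Prod.ext_iff] at h2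

lemma disj13 (n : ℕ) : Disjoint (X1 n) (X3 n) := by
  rw [Set.disjoint_left]
  rintro l ⟨-, -, h1⟩ ⟨-, -, h2⟩
  exact h1 h2

lemma disj23 (n : ℕ) : Disjoint (X2 n) (X3 n) := by
  rw [Set.disjoint_left]
  rintro l ⟨-, h1⟩ ⟨-, h2, -⟩
  rw [h1] at h2
  simp [Prod.ext_iff] at h2

/-- every element of X3 is a hook -/
lemma X3_char (n : ℕ) (l : List V) (hl : l ∈ X3 n) : ∃ m, 1 ≤ m ∧ n = 2*m+1 ∧ l = hook m := by
  obtain ⟨⟨hG, hlen⟩, h2, h00⟩ := hl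
  have hlast : l.getLast? = some (0,0) := by
    obtain ⟨l1, l2, hdec⟩ := List.append_of_mem h00
    have hl1ne : l1 ≠ [] := by
      rintro rfl
      rw [hdec] at hG
      have := hG.head
      simp [Prod.ext_iff] at this
    obtain ⟨d, l1', rfl⟩ : ∃ d l1', l1 = d :: l1' := by
      cases l1 with
      | nil => exact absurd rfl hl1ne
      | cons d l1' => exact ⟨d, l1', rfl⟩
    have hd : d = (0,1) := by
      have := hG.head
      rw [hdec] at this
      simpa using this
    subst hd
    -- if l2 is nonempty we get a contradiction
    match l2, hdec with
    | [], hdec => rw [hdec, List.getLast?_concat]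
    | c :: l2', hdec =>
      exfalso
      have hchain := hG.chain
      have hnodup := hG.nodup
      rw [hdec] at hchain hnodup
      obtain ⟨hch1, hch2, hlink⟩ := List.isChain_append.1 hchain
      have hadjc : gridAdj 2 (0,0) c := (List.isChain_cons_cons.1 hch2).1
      have hdisj := (List.nodup_append.1 hnodup).2.2
      have hcc : c = (0,1) ∨ c = (1,0) := by
        obtain ⟨-, hcg, hcases⟩ := adj_cases hadjc
        obtain ⟨c1, c2⟩ := c
        rw [Prod.ext_iff, Prod.ext_iff]
        simp only [Prod.mk.injEq, Prod.fst, Prod.snd] at *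
        omega
      rcases hcc with rfl | rfl
      · -- (0,1) appears twice
        exact hdisj ((0:ℕ),(1:ℕ)) (by simp) ((0:ℕ),(1:ℕ)) (by simp) rfl
      · -- predecessor of (0,0) is (1,0), so (1,0) appears twice
        have hpred : ((0,1) :: l1').getLast (by simp) = (1,0) := by
          have hadjp : gridAdj 2 (((0,1) :: l1').getLast (by simp)) (0,0) := by
            apply hlink
            · rw [List.getLast?_eq_getLast (by simp)]; simp
            · simp
          have hne01 : ((0,1) :: l1').getLast (by simp) ≠ (0,1) := by
            intro hcon
            have hl1'ne : l1' ≠ [] := by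
              rintro rfl
              -- l = (0,1) :: (0,0) :: ... contradicts h2
              rw [hdec] at h2
              simp [Prod.ext_iff] at h2
            rw [List.getLast_cons hl1'ne] at hcon
            have hnd1 : ((0,1) :: l1').Nodup := (List.nodup_append.1 hnodup).1
            exact (List.nodup_cons.1 hnd1).1 (hcon ▸ List.getLast_mem hl1'ne)
          rcases hq : ((0,1) :: l1').getLast (by simp) with ⟨a, b⟩
          rw [hq] at hadjp hne01
          obtain ⟨hbg, -, hcases⟩ := adj_cases hadjp
          simp only [ne_eq, Prod.mk.injEq, Prod.fst, Prod.snd] at *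
          omega
        exact hdisj ((1:ℕ),(0:ℕ)) (hpred ▸ List.getLast_mem (by simp)) ((1:ℕ),(0:ℕ)) (by simp) rfl
  obtain ⟨m, hm, rfl⟩ := gsaw_hook l hG h2 hlast
  refine ⟨m, hm, ?_, rfl⟩
  rw [hook_length] at hlen
  omega

lemma hook_mem_X3 (m : ℕ) (hm : 1 ≤ m) : hook m ∈ X3 (2*m+1) :=
  ⟨hook_mem_S m hm, hook_tail_head m hm, zz_mem_hook m⟩

lemma X3_sub (n : ℕ) : X3 n ⊆ {hook ((n-1)/2)} := by
  intro l hl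
  obtain ⟨m, hm, hn, rfl⟩ := X3_char n l hl
  have : (n-1)/2 = m := by omega
  rw [this]
  rfl

lemma X3_finite (n : ℕ) : (X3 n).Finite :=
  Set.Finite.subset (Set.finite_singleton _) (X3_sub n)

noncomputable def a (n : ℕ) : ℕ := (S n).ncard
noncomputable def x3 (n : ℕ) : ℕ := (X3 n).ncard

lemma x3_eq (n : ℕ) : x3 n = if n % 2 = 1 ∧ 3 ≤ n then 1 else 0 := by
  split_ifs with h
  · obtain ⟨m, hm, rfl⟩ : ∃ m, 1 ≤ m ∧ n = 2*m+1 := ⟨(n-1)/2, by omega, by omega⟩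
    have heq : X3 (2*m+1) = {hook m} := by
      apply Set.eq_of_subset_of_subset
      · have : (2*m+1-1)/2 = m := by omega
        simpa [this] using X3_sub (2*m+1)
      · rintro l rfl
        exact hook_mem_X3 m hm
    rw [x3, heq, Set.ncard_singleton]
  · have heq : X3 n = ∅ := by
      rw [Set.eq_empty_iff_forall_notMem]
      intro l hl
      obtain ⟨m, hm, hn, -⟩ := X3_char n l hl
      omega
    rw [x3, heq, Set.ncard_empty]

/-! ### small cases -/

lemma S0_empty : S 0 = ∅ := by
  rw [Set.eq_empty_iff_forall_notMem]
  rintro l ⟨hG, hlen⟩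
  have := tail_ne l hG
  cases l with
  | nil => simp at hlen
  | cons a t =>
    have ht : t = [] := by
      have : t.length = 0 := by simpa using hlen
      exact List.length_eq_zero_iff.1 this
    subst ht
    simp at this

lemma X2_1_empty : X2 1 = ∅ := by
  rw [Set.eq_empty_iff_forall_notMem]
  rintro l ⟨⟨hG, hlen⟩, h2⟩
  obtain ⟨b, t, rfl⟩ : ∃ b t, l = b :: t := by
    cases l with
    | nil => exact absurd rfl hG.ne
    | cons b t => exact ⟨b, t, rfl⟩
  have hb : b = (0,1) := by simpa using hG.head
  subst hb
  obtain ⟨c, t', rfl⟩ : ∃ c t', t = c :: t' := by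
    cases t with
    | nil => simp at h2
    | cons c t' => exact ⟨c, t', rfl⟩
  have hc : c = (0,0) := by simpa using h2
  subst hc
  have ht' : t' = [] := by
    have : t'.length = 0 := by simpa using hlen
    exact List.length_eq_zero_iff.1 this
  subst ht'
  have h10 := hG.trapped (1,0) (by
    have he : ([((0:ℕ),(1:ℕ)), ((0:ℕ),(0:ℕ))] : List V).getLast hG.ne = (0,0) := rfl
    rw [he]
    simp [adj_def])
  simp [Prod.ext_iff] at h10

lemma Cs_sub (n : ℕ) : Cs n ⊆ S n := fun _ hl => hl.1

lemma X1_finite (n : ℕ) (h : (S n).Finite) : (X1 (n+1)).Finite := by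
  rw [← (F1_bijOn n).image_eq]
  exact (h.subset (Cs_sub n)).image _

lemma X2_finite (n : ℕ) (h : (S n).Finite) : (X2 (n+2)).Finite := by
  rw [← (F2_bijOn n).image_eq]
  exact h.image _

lemma S_finite : ∀ n, (S n).Finite := by
  intro n
  induction n using Nat.strong_induction_on with
  | _ n ih =>
    match n, ih with
    | 0, _ => rw [S0_empty]; exact Set.finite_empty
    | 1, ih =>
      rw [S_partition]
      exact ((X1_finite 0 (ih 0 (by omega))).union
        (by rw [X2_1_empty]; exact Set.finite_empty)).union (X3_finite 1)
    | (k+2), ih =>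
      rw [S_partition]
      exact ((X1_finite (k+1) (ih (k+1) (by omega))).union
        (X2_finite k (ih k (by omega)))).union (X3_finite (k+2))

lemma X1_finite' (n : ℕ) : (X1 (n+1)).Finite := X1_finite n (S_finite n)
lemma X2_finite' (n : ℕ) : (X2 (n+2)).Finite := X2_finite n (S_finite n)

/-! ### cardinalities -/

lemma card_X1 (n : ℕ) : (X1 (n+1)).ncard = (Cs n).ncard := by
  rw [← (F1_bijOn n).image_eq, Set.ncard_image_of_injOn (F1_injOn n)]

lemma card_X2 (n : ℕ) : (X2 (n+2)).ncard = a n := by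
  rw [← (F2_bijOn n).image_eq, Set.ncard_image_of_injOn (F2_injOn n)]
  rfl

lemma X3_sub_S (n : ℕ) : X3 n ⊆ S n := fun _ hl => hl.1

lemma Cs_eq (n : ℕ) : Cs n = S n \ X3 n := by
  ext l
  constructor
  · rintro ⟨hl, hlast⟩
    refine ⟨hl, ?_⟩
    intro hmem
    obtain ⟨m, -, -, rfl⟩ := X3_char n l hmem
    exact hlast (hook_getLast? m)
  · rintro ⟨hl, hnmem⟩
    refine ⟨hl, ?_⟩
    intro hlast
    have h00 : ((0:ℕ),(0:ℕ)) ∈ l := by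
      obtain ⟨h, heq⟩ := List.mem_getLast?_eq_getLast (x := ((0:ℕ),(0:ℕ)))
        (by rw [hlast]; rfl)
      rw [heq]
      exact List.getLast_mem h
    rcases second_vertex l hl.1 with h2 | h2
    · exact hnmem ⟨hl, h2, h00⟩
    · -- l starts (0,1), (0,0): impossible with last (0,0)
      obtain ⟨b, t, rfl⟩ : ∃ b t, l = b :: t := by
        cases l with
        | nil => exact absurd rfl hl.1.ne
        | cons b t => exact ⟨b, t, rfl⟩
      have hb : b = (0,1) := by simpa using hl.1.head
      subst hb
      obtain ⟨c, t', rfl⟩ : ∃ c t', t = c :: t' := by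
        cases t with
        | nil => simp at h2
        | cons c t' => exact ⟨c, t', rfl⟩
      have hc : c = (0,0) := by simpa using h2
      subst hc
      match t', hl with
      | [], hl =>
        have h10 := hl.1.trapped (1,0) (by
          have he : ([((0:ℕ),(1:ℕ)), ((0:ℕ),(0:ℕ))] : List V).getLast hl.1.ne = (0,0) := rfl
          rw [he]
          simp [adj_def])
        simp [Prod.ext_iff] at h10
      | (d :: t''), hl =>
        have hlast2 : ((0,1) :: (0,0) :: d :: t'').getLast (by simp) = (0,0) := by
          have := List.getLast?_eq_getLast (l := ((0,1) :: (0,0) :: d :: t'' : List V)) (by simp)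
          rw [hlast] at this
          exact (Option.some.inj this).symm
        rw [List.getLast_cons (by simp), List.getLast_cons (by simp)] at hlast2
        have hmem : ((0:ℕ),(0:ℕ)) ∈ d :: t'' := hlast2 ▸ List.getLast_mem (by simp)
        exact (List.nodup_cons.1 (List.nodup_cons.1 hl.1.nodup).2).1 hmem

lemma card_Cs (n : ℕ) : (Cs n).ncard + x3 n = a n := by
  rw [Cs_eq]
  exact Set.ncard_diff_add_ncard_of_subset (X3_sub_S n) (S_finite n)

lemma master (n : ℕ) : a (n+2) + x3 (n+1) = a (n+1) + a n + x3 (n+2) := by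
  have hpart : a (n+2) = (X1 (n+2)).ncard + (X2 (n+2)).ncard + x3 (n+2) := by
    rw [a, S_partition, Set.ncard_union_eq (Set.disjoint_union_left.2 ⟨disj13 _, disj23 _⟩)
      ((X1_finite' (n+1)).union (X2_finite' n)) (X3_finite _),
      Set.ncard_union_eq (disj12 _) (X1_finite' (n+1)) (X2_finite' n)]
    norm_num [x3]
  have h1 : (X1 (n+2)).ncard = (Cs (n+1)).ncard := card_X1 (n+1)
  have h2 : (X2 (n+2)).ncard = a n := card_X2 n
  have h3 := card_Cs (n+1)
  omega

lemma a0 : a 0 = 0 := by rw [a, S0_empty, Set.ncard_empty]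

lemma a1 : a 1 = 0 := by
  rw [a, S_partition]
  have h1 : X1 1 = ∅ := by
    rw [← (F1_bijOn 0).image_eq]
    have : Cs 0 = ∅ := by
      rw [Set.eq_empty_iff_forall_notMem]
      rintro l ⟨hl, -⟩
      rw [S0_empty] at hl
      exact hl
    rw [this]
    simp
  have h3 : X3 1 = ∅ := by
    rw [Set.eq_empty_iff_forall_notMem]
    intro l hl
    obtain ⟨m, hm, hn, -⟩ := X3_char 1 l hl
    omega
  rw [h1, X2_1_empty, h3]
  simp

lemma a2 : a 2 = 0 := by
  have h := master 0
  norm_num at h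
  have e1 : x3 1 = 0 := by rw [x3_eq]; norm_num
  have e2 : x3 2 = 0 := by rw [x3_eq]; norm_num
  rw [a0, a1, e1, e2] at h
  omega

lemma a3 : a 3 = 1 := by
  have h := master 1
  norm_num at h
  have e1 : x3 2 = 0 := by rw [x3_eq]; norm_num
  have e2 : x3 3 = 1 := by rw [x3_eq]; norm_num
  rw [a1, a2, e1, e2] at h
  omega

lemma a4 : a 4 = 0 := by
  have h := master 2
  norm_num at h
  have e1 : x3 3 = 1 := by rw [x3_eq]; norm_num
  have e2 : x3 4 = 0 := by rw [x3_eq]; norm_num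
  rw [a2, a3, e1, e2] at h
  omega

lemma x3_period (k : ℕ) (h : 3 ≤ k) : x3 (k+2) = x3 k := by
  rw [x3_eq, x3_eq]
  have hiff : ((k+2) % 2 = 1 ∧ 3 ≤ k+2) ↔ (k % 2 = 1 ∧ 3 ≤ k) := by omega
  simp only [hiff]

lemma a_rec (m : ℕ) : a (m+4) = 2 * a (m+2) + a (m+1) := by
  cases m with
  | zero => rw [a4, a2, a1]
  | succ k =>
    have h1 := master (k+3)
    have h2 := master (k+2)
    have h3 := x3_period (k+3) (by omega)
    simp only [Nat.add_assoc] at h1 h2 h3 ⊢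
    norm_num at h1 h2 h3 ⊢
    omega

end Gsaw2

/-- Initial values and recurrence for the number of GSAWs on `𝒢_2` of length `n`. -/
theorem gsaw_two_recurrence :
    gsawLenCount 2 0 = 0 ∧ gsawLenCount 2 1 = 0 ∧ gsawLenCount 2 2 = 0 ∧
    gsawLenCount 2 3 = 1 ∧
    ∀ n : ℕ, 4 ≤ n →
      gsawLenCount 2 n = 2 * gsawLenCount 2 (n - 2) + gsawLenCount 2 (n - 3) := by
  have hc : ∀ n, gsawLenCount 2 n = Gsaw2.a n := fun n => rfl
  refine ⟨by rw [hc, Gsaw2.a0], by rw [hc, Gsaw2.a1], by rw [hc, Gsaw2.a2],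
    by rw [hc, Gsaw2.a3], ?_⟩
  intro n hn
  obtain ⟨m, rfl⟩ : ∃ m, n = m + 4 := ⟨n - 4, by omega⟩
  have e2 : m + 4 - 2 = m + 2 := by omega
  have e3 : m + 4 - 3 = m + 1 := by omega
  rw [e2, e3, hc, hc, hc]
  exact Gsaw2.a_rec m
end

section
/- For every integer k ≥ 1, the number of GSAWs on 𝒢_2 starting at (0,1) whose displacement equals k is exactly 2^{k−1}. -/
def pt (x : ℕ) (r : Bool) : ℕ × ℕ := (x, cond r 1 0)

def erow : Bool → List Bool → Bool
  | r, [] => r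
  | r, (false :: c) => erow r c
  | r, (true :: c) => erow (!r) c

def fwd : ℕ → Bool → List Bool → List (ℕ × ℕ)
  | x, r, [] => [pt x r]
  | x, r, (false :: c) => pt x r :: fwd (x+1) r c
  | x, r, (true :: c) => pt x r :: pt x (!r) :: fwd (x+1) (!r) c

def lrun (m len : ℕ) (r : Bool) : List (ℕ × ℕ) :=
  (List.range len).map fun i => pt (m - 1 - i) r

lemma fwd_ne_nil (x r c) : fwd x r c ≠ [] := by
  cases c with
  | nil => simp [fwd]
  | cons a c => cases a <;> simp [fwd]

lemma getLast?_cons_ne {α} (a : α) {l : List α} (h : l ≠ []) :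
    (a :: l).getLast? = l.getLast? := by
  rw [show a :: l = [a] ++ l from rfl, List.getLast?_append_of_ne_nil _ h]

lemma fwd_getLast (x r c) :
    (fwd x r c).getLast? = some (pt (x + c.length) (erow r c)) := by
  induction c generalizing x r with
  | nil => simp [fwd, erow]
  | cons a c ih =>
    cases a
    · show (pt x r :: fwd (x+1) r c).getLast? = _
      rw [getLast?_cons_ne _ (fwd_ne_nil _ _ _), ih]
      simp [erow]; ring_nf
    · show (pt x r :: pt x (!r) :: fwd (x+1) (!r) c).getLast? = _
      rw [getLast?_cons_ne _ (by simp), getLast?_cons_ne _ (fwd_ne_nil _ _ _), ih]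
      simp [erow]; ring_nf

lemma fwd_snoc_false (x r c) :
    fwd x r (c ++ [false]) = fwd x r c ++ [pt (x + c.length + 1) (erow r c)] := by
  induction c generalizing x r with
  | nil => simp [fwd, erow]
  | cons a c ih =>
    cases a <;> simp only [List.cons_append, fwd, erow, List.length_cons] <;> simp <;> ring_nf
    · rw [show 2+x+c.length = (1+x) + c.length + 1 by omega]; exact ih (1+x) r
    · rw [show 2+x+c.length = (1+x) + c.length + 1 by omega]; exact ih (1+x) (!r)

lemma fwd_snoc_true (x r c) :
    fwd x r (c ++ [true]) = fwd x r c ++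
      [pt (x + c.length) (!(erow r c)), pt (x + c.length + 1) (!(erow r c))] := by
  induction c generalizing x r with
  | nil => simp [fwd, erow]
  | cons a c ih =>
    cases a <;> simp only [List.cons_append, fwd, erow, List.length_cons] <;> simp <;> ring_nf
    · rw [show 2+x+c.length = (1+x) + c.length + 1 by omega,
          show 1+x+c.length = (1+x) + c.length by omega]; exact ih (1+x) r
    · rw [show 2+x+c.length = (1+x) + c.length + 1 by omega,
          show 1+x+c.length = (1+x) + c.length by omega]; exact ih (1+x) (!r)

@[simp] lemma pt_fst (x r) : (pt x r).1 = x := rfl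

lemma pt_inj {x y : ℕ} {r s : Bool} (h : pt x r = pt y s) : x = y ∧ r = s := by
  simp [pt, Prod.ext_iff] at h
  refine ⟨h.1, ?_⟩
  cases r <;> cases s <;> simp_all

lemma fwd_mem_bound {x r c} {v : ℕ × ℕ} (h : v ∈ fwd x r c) :
    x ≤ v.1 ∧ v.1 ≤ x + c.length := by
  induction c generalizing x r with
  | nil => simp [fwd] at h; subst h; simp
  | cons a c ih =>
    cases a <;> simp [fwd] at h
    · rcases h with h | h
      · subst h; simp
      · have := ih h; simp [List.length_cons]; omega
    · rcases h with h | h | h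
      · subst h; simp
      · subst h; simp
      · have := ih h; simp [List.length_cons]; omega

lemma fwd_mem_last (x r c) : pt (x + c.length) (erow r c) ∈ fwd x r c :=
  List.mem_of_mem_getLast? (by simp [fwd_getLast])

lemma fwd_mem_flip {c : List Bool} {i : ℕ} (hi : (c)[i]? = some true) (x r s) :
    pt (x + i) s ∈ fwd x r c := by
  induction c generalizing x r i with
  | nil => simp at hi
  | cons a c ih =>
    cases i with
    | zero =>
      simp at hi; subst hi
      cases s <;> cases r <;> simp [fwd, pt]
    | succ i =>
      have hi' : (c)[i]? = some true := by simpa using hi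
      have H := ih hi' (x+1) (if a then !r else r)
      rw [show x + (i+1) = (x+1) + i by omega]
      cases a <;> simp [fwd] at H ⊢ <;> tauto

lemma fwd_mem_row {c : List Bool} {i : ℕ} (hi : i ≤ c.length) (x r) :
    pt (x + i) (erow r (c.take i)) ∈ fwd x r c := by
  induction c generalizing x r i with
  | nil =>
    simp at hi; subst hi; simp [fwd, erow]
  | cons a c ih =>
    cases i with
    | zero => cases a <;> simp [fwd, erow, List.take]
    | succ i =>
      have hi' : i ≤ c.length := by simpa using hi
      rw [show x + (i+1) = (x+1) + i by omega]
      cases a <;> simp [fwd, erow, List.take] <;>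
        first
          | (exact Or.inr (ih hi' (x+1) r))
          | (exact Or.inr (Or.inr (ih hi' (x+1) (!r))))

lemma fwd_mem_false {c : List Bool} {i : ℕ} (hi : (c)[i]? = some false) {x r s}
    (h : pt (x + i) s ∈ fwd x r c) : s = erow r (c.take i) := by
  induction c generalizing x r i with
  | nil => simp at hi
  | cons a c ih =>
    cases i with
    | zero =>
      simp at hi; subst hi
      simp [fwd, erow] at h ⊢
      rcases h with h | h
      · exact (pt_inj h).2
      · have := fwd_mem_bound h; simp at this
    | succ i =>
      have hi' : (c)[i]? = some false := by simpa using hi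
      cases a <;> simp [fwd, erow, List.take] at h ⊢
      · rcases h with h | h
        · have := (pt_inj h).1; omega
        · rw [show x + (i+1) = (x+1) + i by omega] at h
          exact ih hi' h
      · rcases h with h | h | h
        · have := (pt_inj h).1; omega
        · have := (pt_inj h).1; omega
        · rw [show x + (i+1) = (x+1) + i by omega] at h
          exact ih hi' h

def walkOf : ℕ → Bool → List Bool → List (ℕ × ℕ)
  | x, r, [] => [pt x r, pt x (!r)]
  | x, r, (false :: c) =>
      pt x r :: (walkOf (x+1) r c ++ if c.count true = 0 then [pt x (!r)] else [])
  | x, r, (true :: c) => pt x r :: pt x (!r) :: walkOf (x+1) (!r) c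

lemma walkOf_false_pos {c : List Bool} (h : c.count true = 0) (x r) :
    walkOf x r (false :: c) = pt x r :: (walkOf (x+1) r c ++ [pt x (!r)]) := by
  simp [walkOf, h]

lemma walkOf_false_neg {c : List Bool} (h : c.count true ≠ 0) (x r) :
    walkOf x r (false :: c) = pt x r :: walkOf (x+1) r c := by
  simp [walkOf, h]

lemma walkOf_ne_nil (x r c) : walkOf x r c ≠ [] := by
  cases c with
  | nil => simp [walkOf]
  | cons a c => cases a <;> simp [walkOf]

@[simp] lemma walkOf_head (x r c) : (walkOf x r c).head? = some (pt x r) := by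
  cases c with
  | nil => rfl
  | cons a c => cases a <;> simp [walkOf]

lemma walkOf_mem_bound {x r c} {v : ℕ × ℕ} (h : v ∈ walkOf x r c) :
    x ≤ v.1 ∧ v.1 ≤ x + c.length := by
  induction c generalizing x r with
  | nil => simp [walkOf] at h; rcases h with h | h <;> (subst h; simp)
  | cons a c ih =>
    cases a <;> simp [walkOf] at h
    · rcases h with h | h | h
      · subst h; simp
      · have := ih h; simp [List.length_cons]; omega
      · rcases h with ⟨-, h⟩; subst h; simp
    · rcases h with h | h | h
      · subst h; simp
      · subst h; simp
      · have := ih h; simp [List.length_cons]; omega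

lemma walkOf_mem_snd {x r c} {v : ℕ × ℕ} (h : v ∈ walkOf x r c) : v.2 < 2 := by
  induction c generalizing x r with
  | nil =>
    simp [walkOf] at h
    rcases h with h | h <;> (subst h; cases r <;> simp [pt])
  | cons a c ih =>
    cases a <;> simp [walkOf] at h
    · rcases h with h | h | h
      · subst h; cases r <;> simp [pt]
      · exact ih h
      · rcases h with ⟨-, h⟩; subst h; cases r <;> simp [pt]
    · rcases h with h | h | h
      · subst h; cases r <;> simp [pt]
      · subst h; cases r <;> simp [pt]
      · exact ih h

lemma walkOf_getLast_allfalse {c : List Bool} (h : c.count true = 0) (x r) :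
    (walkOf x r c).getLast? = some (pt x (!r)) := by
  induction c generalizing x r with
  | nil => simp [walkOf]
  | cons a c ih =>
    cases a
    · have hc : c.count true = 0 := by simpa using h
      rw [walkOf_false_pos hc, getLast?_cons_ne _ (by simp)]
      simp
    · simp at h

lemma adj_horiz (x r) : gridAdj 2 (pt x r) (pt (x+1) r) := by
  cases r <;> simp [gridAdj, adjPt, pt]

lemma adj_horiz' (x r) : gridAdj 2 (pt (x+1) r) (pt x r) := by
  cases r <;> simp [gridAdj, adjPt, pt]

lemma adj_vert (x r) : gridAdj 2 (pt x r) (pt x (!r)) := by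
  cases r <;> simp [gridAdj, adjPt, pt]

lemma walkOf_chain (x r c) : (walkOf x r c).Chain' (gridAdj 2) := by
  induction c generalizing x r with
  | nil =>
    show List.Chain' _ [pt x r, pt x (!r)]
    simp [List.Chain', List.isChain_cons_cons]
    exact adj_vert x r
  | cons a c ih =>
    cases a
    · by_cases hc : c.count true = 0
      · rw [walkOf_false_pos hc]; dsimp only [List.Chain']; rw [List.isChain_cons]
        constructor
        · intro b hb
          simp [walkOf_head] at hb
          subst hb
          exact adj_horiz x r
        · rw [List.isChain_append]
          refine ⟨ih _ _, by simp, ?_⟩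
          intro y hy z hz
          rw [walkOf_getLast_allfalse hc] at hy
          simp at hy hz
          subst hy; subst hz
          exact adj_horiz' x (!r)
      · rw [walkOf_false_neg hc]; dsimp only [List.Chain']; rw [List.isChain_cons]
        refine ⟨?_, ih _ _⟩
        intro b hb
        simp at hb; subst hb
        exact adj_horiz x r
    · show List.Chain' _ (pt x r :: pt x (!r) :: walkOf (x+1) (!r) c)
      dsimp only [List.Chain']; rw [List.isChain_cons (l := pt x (!r) :: _), List.isChain_cons]
      refine ⟨?_, ?_, ih _ _⟩
      · intro b hb; simp at hb; subst hb; exact adj_vert x r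
      · intro b hb; simp at hb; subst hb; exact adj_horiz x (!r)

lemma pt_ne_not (x y : ℕ) (r : Bool) : pt x r ≠ pt y (!r) := by
  intro h
  have := (pt_inj h).2
  cases r <;> simp at this

lemma walkOf_nodup (x r c) : (walkOf x r c).Nodup := by
  induction c generalizing x r with
  | nil =>
    simp [walkOf]
    exact pt_ne_not x x r
  | cons a c ih =>
    cases a
    · by_cases hc : c.count true = 0
      · rw [walkOf_false_pos hc]
        simp only [List.nodup_cons, List.mem_append, List.mem_singleton]
        refine ⟨?_, ?_⟩
        · rintro (h | h)
          · have := walkOf_mem_bound h; simp at this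
          · exact pt_ne_not x x r h
        · rw [List.nodup_append]
          refine ⟨ih _ _, by simp, ?_⟩
          intro v hv
          simp only [List.mem_singleton]
          intro _ hw hv2; subst hw
          subst hv2
          have := walkOf_mem_bound hv; simp at this
      · rw [walkOf_false_neg hc]
        simp only [List.nodup_cons]
        refine ⟨?_, ih _ _⟩
        intro h
        have := walkOf_mem_bound h; simp at this
    · show List.Nodup (pt x r :: pt x (!r) :: walkOf (x+1) (!r) c)
      simp only [List.nodup_cons, List.mem_cons]
      refine ⟨?_, ?_, ih _ _⟩
      · rintro (h | h)
        · exact pt_ne_not x x r h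
        · have := walkOf_mem_bound h; simp at this
      · intro h
        have := walkOf_mem_bound h; simp at this

lemma walkOf_trap {c : List Bool} (hc : c.getLast? = some false) (x r) :
    ∃ j s, (walkOf x r c).getLast? = some (pt j s) ∧
      pt j (!s) ∈ walkOf x r c ∧ pt (j+1) s ∈ walkOf x r c ∧
      ((j = x ∧ s = !r ∧ c.count true = 0) ∨ pt (j - 1) s ∈ walkOf x r c) := by
  induction c generalizing x r with
  | nil => simp at hc
  | cons a c ih =>
    rcases eq_or_ne c [] with hnil | hnil
    · subst hnil
      simp at hc; subst hc
      refine ⟨x, !r, ?_, ?_, ?_, Or.inl ⟨rfl, rfl, by simp⟩⟩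
      · rw [walkOf_false_pos (by simp), getLast?_cons_ne _ (by simp)]
        simp
      · rw [walkOf_false_pos (by simp)]
        simp [walkOf]
      · rw [walkOf_false_pos (by simp)]
        have : pt (x+1) (!r) ∈ walkOf (x+1) r [] := by simp [walkOf]
        simp [walkOf]
    · have hc' : c.getLast? = some false := by
        rwa [getLast?_cons_ne _ hnil] at hc
      cases a
      · by_cases hcount : c.count true = 0
        · refine ⟨x, !r, ?_, ?_, ?_, Or.inl ⟨rfl, rfl, by simp [hcount]⟩⟩
          · rw [walkOf_false_pos hcount, getLast?_cons_ne _ (by simp)]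
            simp
          · rw [walkOf_false_pos hcount]
            simp
          · rw [walkOf_false_pos hcount]
            have : pt (x+1) (!r) ∈ walkOf (x+1) r c :=
              List.mem_of_mem_getLast? (by simp [walkOf_getLast_allfalse hcount])
            simp [this]
        · obtain ⟨j, s, h1, h2, h3, h4⟩ := ih hc' (x+1) r
          refine ⟨j, s, ?_, ?_, ?_, ?_⟩
          · rw [walkOf_false_neg hcount, getLast?_cons_ne _ (walkOf_ne_nil _ _ _)]
            exact h1
          · rw [walkOf_false_neg hcount]; exact List.mem_cons_of_mem _ h2
          · rw [walkOf_false_neg hcount]; exact List.mem_cons_of_mem _ h3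
          · rcases h4 with ⟨-, -, h4⟩ | h4
            · exact absurd h4 hcount
            · rw [walkOf_false_neg hcount]
              exact Or.inr (List.mem_cons_of_mem _ h4)
      · obtain ⟨j, s, h1, h2, h3, h4⟩ := ih hc' (x+1) (!r)
        have hshape : walkOf x r (true :: c) = pt x r :: pt x (!r) :: walkOf (x+1) (!r) c := rfl
        refine ⟨j, s, ?_, ?_, ?_, ?_⟩
        · rw [hshape, getLast?_cons_ne _ (by simp), getLast?_cons_ne _ (walkOf_ne_nil _ _ _)]
          exact h1
        · rw [hshape]; exact List.mem_cons_of_mem _ (List.mem_cons_of_mem _ h2)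
        · rw [hshape]; exact List.mem_cons_of_mem _ (List.mem_cons_of_mem _ h3)
        · rcases h4 with ⟨hj, hs, -⟩ | h4
          · right
            rw [hshape]
            subst hj
            have hs' : s = r := by rw [hs]; simp
            subst hs'
            simp
          · right
            rw [hshape]
            exact List.mem_cons_of_mem _ (List.mem_cons_of_mem _ h4)

lemma walkOf_mem_top (x r c) : ∃ s, pt (x + c.length) s ∈ walkOf x r c := by
  induction c generalizing x r with
  | nil => exact ⟨r, by simp [walkOf]⟩
  | cons a c ih =>
    obtain ⟨s, hs⟩ := ih (x+1) (if a then !r else r)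
    refine ⟨s, ?_⟩
    rw [show x + (a :: c).length = (x+1) + c.length by simp; omega]
    cases a <;> simp [walkOf] at hs ⊢ <;> tauto

/-- The displacement of a walk: the largest x-coordinate among its vertices. -/
def disp (l : List (ℕ × ℕ)) : ℕ := (l.map Prod.fst).foldr max 0

lemma foldr_max_le {k : ℕ} {L : List ℕ} (h : ∀ a ∈ L, a ≤ k) : L.foldr max 0 ≤ k := by
  induction L with
  | nil => simp
  | cons a L ih =>
    simp only [List.foldr_cons]
    have := h a (by simp)
    have := ih (fun b hb => h b (by simp [hb]))
    omega

lemma le_foldr_max {a : ℕ} {L : List ℕ} (h : a ∈ L) : a ≤ L.foldr max 0 := by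
  induction L with
  | nil => simp at h
  | cons b L ih =>
    simp only [List.foldr_cons]
    rcases List.mem_cons.mp h with h | h
    · subst h; omega
    · have := ih h; omega

lemma disp_eq {l : List (ℕ × ℕ)} {k : ℕ} (h1 : ∀ v ∈ l, v.1 ≤ k)
    (h2 : ∃ v ∈ l, v.1 = k) : disp l = k := by
  obtain ⟨v, hv, hvk⟩ := h2
  refine le_antisymm (foldr_max_le ?_) ?_
  · intro a ha
    simp only [List.mem_map] at ha
    obtain ⟨w, hw, rfl⟩ := ha
    exact h1 w hw
  · subst hvk
    exact le_foldr_max (List.mem_map_of_mem (f := Prod.fst) hv)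

lemma disp_walkOf (r : Bool) (c : List Bool) : disp (walkOf 0 r c) = c.length := by
  refine disp_eq (fun v hv => ?_) ?_
  · have := walkOf_mem_bound hv; omega
  · obtain ⟨s, hs⟩ := walkOf_mem_top 0 r c
    exact ⟨pt (0 + c.length) s, hs, by simp⟩

lemma adj_cases {j : ℕ} {s : Bool} {w : ℕ × ℕ} (h : gridAdj 2 (pt j s) w) :
    w = pt (j+1) s ∨ (1 ≤ j ∧ w = pt (j-1) s) ∨ w = pt j (!s) := by
  obtain ⟨hadj, -, hw2⟩ := h
  rcases w with ⟨a, b⟩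
  cases s <;>
    · simp only [adjPt, pt] at hadj ⊢
      simp only [Prod.mk.injEq]
      simp at hw2 hadj ⊢
      omega

lemma walkOf_isGSAW (b' : List Bool) : IsGSAW 2 (walkOf 0 true (b' ++ [false])) := by
  set c := b' ++ [false] with hc
  have hlast : c.getLast? = some false := by simp [hc]
  obtain ⟨j, s, h1, h2, h3, h4⟩ := walkOf_trap hlast 0 true
  refine ⟨walkOf_ne_nil _ _ _, by rw [walkOf_head]; rfl, fun v hv => walkOf_mem_snd hv,
    walkOf_nodup _ _ _, walkOf_chain _ _ _, ?_⟩
  intro w hw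
  have hgl : (walkOf 0 true c).getLast (walkOf_ne_nil _ _ _) = pt j s := by
    have h5 := List.getLast?_eq_getLast_of_ne_nil (l := walkOf 0 true c) (walkOf_ne_nil _ _ _)
    rw [h5] at h1
    exact Option.some.inj h1
  rw [hgl] at hw
  rcases adj_cases hw with rfl | ⟨hj, rfl⟩ | rfl
  · exact h3
  · rcases h4 with ⟨rfl, -, -⟩ | h4
    · omega
    · exact h4
  · exact h2

lemma lrun_snoc (m len : ℕ) (s : Bool) :
    lrun m (len+1) s = lrun m len s ++ [pt (m-1-len) s] := by
  simp [lrun, List.range_succ]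

lemma walkOf_eq_fwd_nil (len x : ℕ) (r : Bool) :
    walkOf x r (List.replicate len false) =
      fwd x r (List.replicate len false) ++
        (pt (x + len) (!r) :: lrun (x + len) len (!r)) := by
  induction len generalizing x with
  | zero => simp [walkOf, fwd, lrun]
  | succ len ih =>
    have hrep : List.replicate (len+1) false = false :: List.replicate len false := rfl
    rw [hrep, walkOf_false_pos (by rw [List.count_eq_zero]; simp), ih (x+1)]
    rw [show x + (len+1) = (x+1) + len by omega, lrun_snoc,
      show (x+1+len)-1-len = x by omega]
    simp [fwd]

lemma walkOf_eq_fwd (c₀ : List Bool) (len x : ℕ) (r : Bool)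
    (h : c₀ = [] ∨ c₀.getLast? = some true) :
    walkOf x r (c₀ ++ List.replicate len false) =
      fwd x r (c₀ ++ List.replicate len false) ++
        (pt (x + c₀.length + len) (!(erow r c₀)) ::
          lrun (x + c₀.length + len) len (!(erow r c₀))) := by
  induction c₀ generalizing x r with
  | nil => simpa [erow] using walkOf_eq_fwd_nil len x r
  | cons a c₁ ih =>
    rcases h with h | h
    · simp at h
    cases a
    · have hne : c₁ ≠ [] := by
        rintro rfl
        simp at h
      have hl : c₁.getLast? = some true := by rwa [getLast?_cons_ne _ hne] at h
      have htrue : true ∈ c₁ := List.mem_of_mem_getLast? (by rw [hl]; rfl)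
      have hcount : (c₁ ++ List.replicate len false).count true ≠ 0 := by
        intro h0
        rw [List.count_eq_zero] at h0
        exact h0 (by simp [htrue])
      rw [List.cons_append, walkOf_false_neg hcount, ih (x+1) r (Or.inr hl)]
      simp only [erow, List.length_cons]
      rw [show x + (c₁.length+1) + len = (x+1) + c₁.length + len by omega]
      simp [fwd]
    · rw [List.cons_append]
      have hh : c₁ = [] ∨ c₁.getLast? = some true := by
        rcases eq_or_ne c₁ [] with hne | hne
        · exact Or.inl hne
        · exact Or.inr (by rwa [getLast?_cons_ne _ hne] at h)
      have h2 : walkOf x r (true :: (c₁ ++ List.replicate len false)) =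
          pt x r :: pt x (!r) :: walkOf (x+1) (!r) (c₁ ++ List.replicate len false) := rfl
      have h3 : fwd x r (true :: (c₁ ++ List.replicate len false)) =
          pt x r :: pt x (!r) :: fwd (x+1) (!r) (c₁ ++ List.replicate len false) := rfl
      rw [h2, h3, ih (x+1) (!r) hh]
      simp only [erow, List.length_cons]
      rw [show x + (c₁.length+1) + len = (x+1) + c₁.length + len by omega]
      simp

lemma erow_allfalse {d : List Bool} (h : d.count true = 0) (e : Bool) : erow e d = e := by
  induction d with
  | nil => rfl
  | cons a d ih =>
    cases a
    · exact ih (by simpa using h)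
    · simp at h

lemma lrun_getLast {len : ℕ} (h : 1 ≤ len) (m : ℕ) (s : Bool) :
    (lrun m len s).getLast? = some (pt (m - len) s) := by
  obtain ⟨len', rfl⟩ : ∃ len', len = len' + 1 := ⟨len - 1, by omega⟩
  rw [lrun_snoc]
  simp [show m - 1 - len' = m - (len'+1) by omega]

lemma lrun_mem {m len : ℕ} {s : Bool} {v : ℕ × ℕ} :
    v ∈ lrun m len s ↔ ∃ i < len, v = pt (m - 1 - i) s := by
  simp [lrun, eq_comm]

lemma erow_append (r : Bool) (c d : List Bool) :
    erow r (c ++ d) = erow (erow r c) d := by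
  induction c generalizing r with
  | nil => rfl
  | cons a c ih => cases a <;> simp [erow, ih]

lemma fwd_mem_pred (x : ℕ) (r : Bool) (d : List Bool) (a : Bool) :
    pt (x + d.length) (erow r (d ++ [a])) ∈ fwd x r (d ++ [a]) := by
  cases a
  · rw [fwd_snoc_false, erow_append]
    simp only [erow]
    exact List.mem_append_left _ (fwd_mem_last x r d)
  · rw [fwd_snoc_true, erow_append]
    simp only [erow]
    simp

lemma exists_snoc {c : List Bool} (h : c ≠ []) : ∃ d a, c = d ++ [a] :=
  ⟨c.dropLast, c.getLast h, (List.dropLast_append_getLast h).symm⟩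

def P1 (l : List (ℕ × ℕ)) : Prop := ∃ c : List Bool, l = fwd 0 true c

def P2 (l : List (ℕ × ℕ)) : Prop :=
  ∃ c : List Bool, l = fwd 0 true c ++ [pt c.length (!(erow true c))]

def P3 (l : List (ℕ × ℕ)) : Prop :=
  ∃ (c : List Bool) (len : ℕ), 1 ≤ len ∧ len ≤ c.length ∧
    c.drop (c.length - len) = List.replicate len false ∧
    l = fwd 0 true c ++
      (pt c.length (!(erow true c)) :: lrun c.length len (!(erow true c)))

lemma erow_replicate (r : Bool) (n : ℕ) : erow r (List.replicate n false) = r :=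
  erow_allfalse (by rw [List.count_eq_zero]; simp) r

lemma erow_eq_of_drop_replicate {c : List Bool} {j len : ℕ} (hj : j = c.length - len)
    (hd : c.drop j = List.replicate len false) (r : Bool) :
    erow r c = erow r (c.take j) := by
  conv_lhs => rw [← List.take_append_drop j c]
  rw [erow_append, hd, erow_replicate]

lemma classify : ∀ (l : List (ℕ × ℕ)), l ≠ [] → l.head? = some (0, 1) →
    l.Nodup → l.Chain' (gridAdj 2) → P1 l ∨ P2 l ∨ P3 l := by
  intro l
  induction l using List.reverseRecOn with
  | nil => intro h; exact absurd rfl h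
  | append_singleton l v ih =>
    intro _ hhead hnd hch
    rcases eq_or_ne l [] with rfl | hne
    · left
      refine ⟨[], ?_⟩
      simp at hhead
      simp [fwd, hhead, pt]
    · have hhead' : l.head? = some (0, 1) := by
        rwa [List.head?_append_of_ne_nil _ hne] at hhead
      have hnd' : l.Nodup := hnd.of_append_left
      have hch' : l.Chain' (gridAdj 2) := (List.isChain_append.mp hch).1
      have hvnot : v ∉ l := fun hmem => (List.disjoint_of_nodup_append hnd) hmem (by simp)
      have hadj : gridAdj 2 (l.getLast hne) v := by
        have h3 := (List.isChain_append.mp hch).2.2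
        exact h3 _ (by simp [List.getLast?_eq_getLast_of_ne_nil hne]) _ (by simp)
      rcases ih hne hhead' hnd' hch' with ⟨c, rfl⟩ | ⟨c, rfl⟩ |
          ⟨c, len, hlen1, hlenm, hrep, rfl⟩
      · -- P1 case
        have hlast : (fwd 0 true c).getLast hne = pt c.length (erow true c) := by
          have h0 := fwd_getLast 0 true c
          rw [List.getLast?_eq_getLast_of_ne_nil hne] at h0
          simpa using h0
        rw [hlast] at hadj
        rcases adj_cases hadj with rfl | ⟨hj, rfl⟩ | rfl
        · left
          exact ⟨c ++ [false], by rw [fwd_snoc_false]; norm_num⟩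
        · exfalso
          obtain ⟨d, a, rfl⟩ := exists_snoc (c := c)
            (by rintro rfl; simp at hj)
          apply hvnot
          rw [show (d ++ [a]).length - 1 = 0 + d.length by simp]
          exact fwd_mem_pred 0 true d a
        · right; left; exact ⟨c, rfl⟩
      · -- P2 case
        have hlast : (fwd 0 true c ++ [pt c.length (!(erow true c))]).getLast hne =
            pt c.length (!(erow true c)) := by
          have h0 : (fwd 0 true c ++ [pt c.length (!(erow true c))]).getLast? =
              some (pt c.length (!(erow true c))) := by
            rw [List.getLast?_append_of_ne_nil _ (by simp)]; rfl
          rw [List.getLast?_eq_getLast_of_ne_nil hne] at h0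
          simpa using h0
        rw [hlast] at hadj
        rcases adj_cases hadj with rfl | ⟨hj, rfl⟩ | rfl
        · left
          refine ⟨c ++ [true], ?_⟩
          rw [fwd_snoc_true]
          norm_num
        · obtain ⟨d, a, rfl⟩ := exists_snoc (c := c) (by rintro rfl; simp at hj)
          cases a
          · -- ends in false : becomes P3 with len = 1
            right; right
            refine ⟨d ++ [false], 1, le_refl _, by simp, ?_, ?_⟩
            · rw [show (d ++ [false]).length - 1 = d.length by simp]
              rw [List.drop_left]
              rfl
            · rw [show (d ++ [false]).length - 1 = d.length by simp]
              rw [List.append_assoc]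
              congr 1
              simp [lrun, List.range_succ]
          · -- ends in true : contradiction
            exfalso
            apply hvnot
            have hmem : pt (0 + d.length) (erow true d) ∈ fwd 0 true d :=
              fwd_mem_last 0 true d
            rw [fwd_snoc_true]
            refine List.mem_append_left _ (List.mem_append_left _ ?_)
            have hrow : (!(erow true (d ++ [true]))) = erow true d := by
              rw [erow_append]; simp [erow]
            rw [show (d ++ [true]).length - 1 = 0 + d.length by simp, hrow]
            exact hmem
        · exfalso
          apply hvnot
          refine List.mem_append_left _ ?_
          have h0 := fwd_mem_last 0 true c
          simpa using h0
      · -- P3 case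
        set m := c.length with hm
        set ρ := erow true c with hρ
        have hlrun_ne : lrun m len (!ρ) ≠ [] := by
          simp [lrun]
          omega
        have hlast : (fwd 0 true c ++ (pt m (!ρ) :: lrun m len (!ρ))).getLast hne =
            pt (m - len) (!ρ) := by
          have h0 : (fwd 0 true c ++ (pt m (!ρ) :: lrun m len (!ρ))).getLast? =
              some (pt (m - len) (!ρ)) := by
            rw [List.getLast?_append_of_ne_nil _ (by simp),
              getLast?_cons_ne _ hlrun_ne, lrun_getLast hlen1]
          rw [List.getLast?_eq_getLast_of_ne_nil hne] at h0
          simpa using h0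
        rw [hlast] at hadj
        rcases adj_cases hadj with rfl | ⟨hj, rfl⟩ | rfl
        · -- right neighbour is already in the walk
          exfalso
          apply hvnot
          refine List.mem_append_right _ ?_
          rcases eq_or_lt_of_le hlen1 with h1 | h1
          · rw [show m - len + 1 = m by omega]
            simp
          · refine List.mem_cons_of_mem _ (lrun_mem.mpr ⟨len - 2, by omega, ?_⟩)
            congr 1
            omega
        · -- extend the left run
          right; right
          have hlt : m - len - 1 < c.length := by omega
          have hcons : c.drop (m - len - 1) = c.get ⟨m - len - 1, hlt⟩ :: c.drop (m - len - 1 + 1) :=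
            List.drop_eq_getElem_cons hlt
          have hget : c.get ⟨m - len - 1, hlt⟩ = false := by
            by_contra hgt
            have hgt' : c.get ⟨m - len - 1, hlt⟩ = true := by
              cases h : c.get ⟨m - len - 1, hlt⟩
              · exact absurd h hgt
              · rfl
            apply hvnot
            have h5 := fwd_mem_flip (c := c) (i := m - len - 1)
              (by rw [List.getElem?_eq_getElem hlt]; exact congrArg some hgt') 0 true (!ρ)
            exact List.mem_append_left _ (by simpa using h5)
          rw [hget] at hcons
          refine ⟨c, len + 1, by omega, by omega, ?_, ?_⟩
          · rw [show m - (len + 1) = m - len - 1 by omega, hcons,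
              show m - len - 1 + 1 = m - len by omega, hrep]
            rfl
          · rw [lrun_snoc, show m - 1 - len = m - len - 1 by omega]
            simp [List.append_assoc]
            exact ⟨rfl, rfl, rfl⟩
        · -- vertical neighbour is already in the walk
          exfalso
          apply hvnot
          refine List.mem_append_left _ ?_
          have h0 := fwd_mem_row (c := c) (i := m - len) (by omega) 0 true
          have h1 : erow true (c.take (m - len)) = ρ :=
            (erow_eq_of_drop_replicate rfl hrep true).symm
          rw [h1] at h0
          simpa using h0

lemma gsaw_eq_walkOf {l : List (ℕ × ℕ)} (hg : IsGSAW 2 l) :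
    ∃ b' : List Bool, l = walkOf 0 true (b' ++ [false]) := by
  have hhead : l.head? = some (0, 1) := by simpa using hg.head
  have hne := hg.ne
  rcases classify l hne hhead hg.nodup hg.chain with ⟨c, rfl⟩ | ⟨c, rfl⟩ |
      ⟨c, len, hlen1, hlenm, hrep, rfl⟩
  · exfalso
    have hlast : (fwd 0 true c).getLast hne = pt c.length (erow true c) := by
      have h0 := fwd_getLast 0 true c
      rw [List.getLast?_eq_getLast_of_ne_nil hne] at h0
      simpa using h0
    have hmem := hg.trapped (pt (c.length + 1) (erow true c))
      (by rw [hlast]; exact adj_horiz _ _)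
    have hb := fwd_mem_bound hmem
    simp at hb
  · exfalso
    have hlast : (fwd 0 true c ++ [pt c.length (!(erow true c))]).getLast hne =
        pt c.length (!(erow true c)) := by
      have h0 : (fwd 0 true c ++ [pt c.length (!(erow true c))]).getLast? =
          some (pt c.length (!(erow true c))) := by
        rw [List.getLast?_append_of_ne_nil _ (by simp)]; rfl
      rw [List.getLast?_eq_getLast_of_ne_nil hne] at h0
      simpa using h0
    have hmem := hg.trapped (pt (c.length + 1) (!(erow true c)))
      (by rw [hlast]; exact adj_horiz _ _)
    rcases List.mem_append.mp hmem with h | h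
    · have hb := fwd_mem_bound h
      simp at hb
    · simp at h
      have := (pt_inj h).1
      omega
  · set m := c.length with hm
    set ρ := erow true c with hρ
    set j := m - len with hjdef
    have hlrun_ne : lrun m len (!ρ) ≠ [] := by
      simp [lrun]; omega
    have hlast : (fwd 0 true c ++ (pt m (!ρ) :: lrun m len (!ρ))).getLast hne =
        pt j (!ρ) := by
      have h0 : (fwd 0 true c ++ (pt m (!ρ) :: lrun m len (!ρ))).getLast? =
          some (pt j (!ρ)) := by
        rw [List.getLast?_append_of_ne_nil _ (by simp),
          getLast?_cons_ne _ hlrun_ne, lrun_getLast hlen1]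
      rw [List.getLast?_eq_getLast_of_ne_nil hne] at h0
      simpa using h0
    have key : ∃ c₀ : List Bool, (c₀ = [] ∨ c₀.getLast? = some true) ∧
        c₀.length = j ∧ c = c₀ ++ List.replicate len false := by
      rcases Nat.eq_zero_or_pos j with hj0 | hjpos
      · refine ⟨c.take j, Or.inl (by simp [hj0]), by simp [hj0], ?_⟩
        conv_lhs => rw [← List.take_append_drop j c]
        rw [hrep, hj0]
      · -- j ≥ 1 : the trapped condition forces a flip just before the run
        have hlt : j - 1 < c.length := by omega
        have hmem := hg.trapped (pt (j - 1) (!ρ))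
          (by rw [hlast, show j = (j-1)+1 by omega]; exact adj_horiz' _ _)
        have hget : c.get ⟨j - 1, hlt⟩ = true := by
          rcases List.mem_append.mp hmem with h | h
          · cases hval : c.get ⟨j - 1, hlt⟩
            · exfalso
              have hfalse := fwd_mem_false (c := c) (i := j - 1)
                (by rw [List.getElem?_eq_getElem hlt]; exact congrArg some hval) (x := 0) (r := true) (by simpa using h)
              -- !ρ = erow true (take (j-1) c) = ρ
              have hdrop : c.drop (j - 1) = List.replicate (len + 1) false := by
                rw [List.drop_eq_getElem_cons (i := j - 1) hlt, show (c)[j-1] = c.get ⟨j-1, hlt⟩ from rfl, hval,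
                  show j - 1 + 1 = j by omega, hrep]
                rfl
              have := erow_eq_of_drop_replicate (j := j - 1) (len := len + 1)
                (by omega) hdrop true
              rw [← this, ← hρ] at hfalse
              cases ρ <;> simp at hfalse
            · rfl
          · exfalso
            rcases List.mem_cons.mp h with h | h
            · have := (pt_inj h).1; omega
            · rcases lrun_mem.mp h with ⟨i, hi, hh⟩
              have := (pt_inj hh).1
              omega
        refine ⟨c.take (j - 1) ++ [true], Or.inr ?_, ?_, ?_⟩
        · rw [List.getLast?_append_of_ne_nil _ (by simp)]; rfl
        · simp
          omega
        · rw [List.append_assoc]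
          conv_lhs => rw [← List.take_append_drop (j-1) c]
          congr 1
          rw [List.drop_eq_getElem_cons (i := j - 1) hlt, show (c)[j-1] = c.get ⟨j-1, hlt⟩ from rfl, hget,
            show j - 1 + 1 = j by omega, hrep]
          rfl
    obtain ⟨c₀, hc₀, hc₀len, hcdec⟩ := key
    have hrow : erow true c₀ = ρ := by
      have h1 := erow_eq_of_drop_replicate (j := j) (len := len) (by omega) hrep true
      have h2 : c.take j = c₀ := by
        rw [hcdec, List.take_left' hc₀len]
      rw [h2] at h1
      exact h1.symm
    have hwalk := walkOf_eq_fwd c₀ len 0 true hc₀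
    rw [← hcdec, hrow, hc₀len, show 0 + j + len = m by omega] at hwalk
    refine ⟨c₀ ++ List.replicate (len - 1) false, ?_⟩
    have hsplit : (c₀ ++ List.replicate (len - 1) false) ++ [false] =
        c₀ ++ List.replicate len false := by
      rw [List.append_assoc]
      congr 1
      rw [← List.replicate_succ' (n := len - 1) (a := false)]  -- name check
      congr 1
      omega
    rw [hsplit, ← hcdec, hwalk]

lemma walkOf_length_ge (x r c) : c.length + 2 ≤ (walkOf x r c).length := by
  induction c generalizing x r with
  | nil => simp [walkOf]
  | cons a c ih =>
    cases a
    · by_cases hc : c.count true = 0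
      · rw [walkOf_false_pos hc]
        have := ih (x+1) r
        simp
        omega
      · rw [walkOf_false_neg hc]
        have := ih (x+1) r
        simp
        omega
    · have h0 : walkOf x r (true :: c) = pt x r :: pt x (!r) :: walkOf (x+1) (!r) c := rfl
      rw [h0]
      have := ih (x+1) (!r)
      simp
      omega

lemma walkOf_inj : ∀ {c₁ c₂ : List Bool} {x : ℕ} {r : Bool},
    walkOf x r c₁ = walkOf x r c₂ → c₁ = c₂ := by
  intro c₁
  induction c₁ with
  | nil =>
    intro c₂ x r h
    cases c₂ with
    | nil => rfl
    | cons a c₂ =>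
      exfalso
      have h1 := congrArg List.length h
      have h2 := walkOf_length_ge x r (a :: c₂)
      simp [walkOf] at h1
      simp at h2
      omega
  | cons a c₁ ih =>
    intro c₂ x r h
    cases c₂ with
    | nil =>
      exfalso
      have h1 := congrArg List.length h
      have h2 := walkOf_length_ge x r (a :: c₁)
      simp [walkOf] at h1
      simp at h2
      omega
    | cons b c₂ =>
      have hsec : ∀ (c : List Bool) (d : Bool),
          (walkOf x r (d :: c)).tail.head? = some (if d then pt x (!r) else pt (x+1) r) := by
        intro c d
        cases d
        · by_cases hc : c.count true = 0
          · rw [walkOf_false_pos hc]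
            simp [List.head?_append_of_ne_nil _ (walkOf_ne_nil _ _ _)]
          · rw [walkOf_false_neg hc]
            simp
        · rfl
      have hab : a = b := by
        have h1 := hsec c₁ a
        have h2 := hsec c₂ b
        rw [h] at h1
        rw [h1] at h2
        cases a <;> cases b <;> simp at h2 <;> first | rfl | (have := (pt_inj h2).1; omega)
      subst hab
      cases a
      · -- both false
        have hT : (walkOf (x+1) r c₁ ++ if c₁.count true = 0 then [pt x (!r)] else []) =
            (walkOf (x+1) r c₂ ++ if c₂.count true = 0 then [pt x (!r)] else []) := by
          have h0 : walkOf x r (false :: c₁) =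
              pt x r :: (walkOf (x+1) r c₁ ++ if c₁.count true = 0 then [pt x (!r)] else []) := rfl
          have h1 : walkOf x r (false :: c₂) =
              pt x r :: (walkOf (x+1) r c₂ ++ if c₂.count true = 0 then [pt x (!r)] else []) := rfl
          rw [h0, h1] at h
          exact List.tail_eq_of_cons_eq h
        by_cases h₁ : c₁.count true = 0 <;> by_cases h₂ : c₂.count true = 0
        · rw [if_pos h₁, if_pos h₂] at hT
          have := List.append_cancel_right hT
          rw [ih this]
        · exfalso
          rw [if_pos h₁, if_neg h₂, List.append_nil] at hT
          have hmem : pt x (!r) ∈ walkOf (x+1) r c₂ := by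
            rw [← hT]; simp
          have := walkOf_mem_bound hmem
          simp at this
        · exfalso
          rw [if_neg h₁, if_pos h₂, List.append_nil] at hT
          have hmem : pt x (!r) ∈ walkOf (x+1) r c₁ := by
            rw [hT]; simp
          have := walkOf_mem_bound hmem
          simp at this
        · rw [if_neg h₁, if_neg h₂, List.append_nil, List.append_nil] at hT
          rw [ih hT]
      · -- both true
        have h0 : walkOf x r (true :: c₁) = pt x r :: pt x (!r) :: walkOf (x+1) (!r) c₁ := rfl
        have h1 : walkOf x r (true :: c₂) = pt x r :: pt x (!r) :: walkOf (x+1) (!r) c₂ := rfl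
        rw [h0, h1] at h
        have := List.tail_eq_of_cons_eq (List.tail_eq_of_cons_eq h)
        rw [ih this]

/-- The number of GSAWs on `𝒢_h` with displacement `k`. -/
noncomputable def gsawDispCount (h k : ℕ) : ℕ :=
  Set.ncard {l : List (ℕ × ℕ) | IsGSAW h l ∧ disp l = k}

/-- For every `k ≥ 1`, there are exactly `2^(k-1)` GSAWs on `𝒢_2` with
displacement `k`. -/
theorem gsaw_two_disp_count (k : ℕ) (hk : 1 ≤ k) :
    gsawDispCount 2 k = 2 ^ (k - 1) := by
  have hinj : Function.Injective (fun b' : List Bool => walkOf 0 true (b' ++ [false])) := by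
    intro a b h
    have h2 := walkOf_inj h
    simpa using h2
  have hset : {l : List (ℕ × ℕ) | IsGSAW 2 l ∧ disp l = k} =
      (fun b' : List Bool => walkOf 0 true (b' ++ [false])) ''
        {b' : List Bool | b'.length = k - 1} := by
    ext l
    simp only [Set.mem_setOf_eq, Set.mem_image]
    constructor
    · rintro ⟨hg, hdisp⟩
      obtain ⟨b', rfl⟩ := gsaw_eq_walkOf hg
      refine ⟨b', ?_, rfl⟩
      have hd := disp_walkOf true (b' ++ [false])
      rw [hdisp] at hd
      simp at hd
      omega
    · rintro ⟨b', hb, rfl⟩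
      refine ⟨walkOf_isGSAW b', ?_⟩
      rw [disp_walkOf]
      simp [hb]
      omega
  rw [gsawDispCount, hset, Set.ncard_image_of_injective _ hinj]
  have e : {b' : List Bool | b'.length = k - 1} ≃ List.Vector Bool (k - 1) :=
    Equiv.subtypeEquivRight (fun b' => Iff.rfl)
  rw [← Nat.card_coe_set_eq, Nat.card_congr e, Nat.card_eq_fintype_card,
    card_vector, Fintype.card_bool]
end

section
/- For every integer k ≥ 1, the generating function G_k(x) = Σ_{n ≥ 0} g_{k,n} x^n, where g_{k,n} is the number of Greek key tours on the k × n grid graph (with the convention g_{k,0} = 1), is rational: there exist polynomials P, Q ∈ ℚ[x] with Q(0) ≠ 0 such that Q · G_k = P holds in ℚ[[x]]. -/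
/-- A Greek key tour on the `k × n` grid graph (vertex set
`{0, ..., n-1} × {0, ..., k-1}`): a Hamiltonian path starting at the top-left
corner `(0, k-1)`, i.e. a sequence of pairwise distinct vertices, consecutive ones
adjacent, visiting every vertex of the grid exactly once. -/
def IsGreekKey (k n : ℕ) (l : List (ℕ × ℕ)) : Prop :=
  l.head? = some (0, k - 1) ∧ l.Nodup ∧ l.Chain' adjPt ∧
    ∀ v : ℕ × ℕ, v ∈ l ↔ (v.1 < n ∧ v.2 < k)

/-- `g_{k,n}`: the number of Greek key tours on the `k × n` grid graph, with the
convention `g_{k,0} = 1`. -/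
noncomputable def greekKeyCount (k n : ℕ) : ℕ :=
  if n = 0 then 1 else Set.ncard {l : List (ℕ × ℕ) | IsGreekKey k n l}

/-- The generating function `G_k(x)` counting Greek key tours of height `k`. -/
noncomputable def greekKeyGF (k : ℕ) : PowerSeries ℚ :=
  PowerSeries.mk fun n => (greekKeyCount k n : ℚ)

namespace GK

abbrev V : Type := ℕ × ℕ
abbrev Sig : Type := List (ℕ × Option ℕ)

def inter : List (List V) → List (List V) → List V
  | [], ys => ys.flatten
  | x :: xs, ys => x ++ inter ys xs
termination_by xs ys => xs.length + ys.length
decreasing_by simp; omega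

@[simp] lemma inter_nil (ys : List (List V)) : inter [] ys = ys.flatten := by simp [inter]
@[simp] lemma inter_cons (x : List V) (xs ys : List (List V)) :
    inter (x :: xs) ys = x ++ inter ys xs := by rw [inter]

inductive IlkL (c : ℕ) : V → List (List V) → Sig → Prop
  | last (v : V) (L : List V) (h : L.head? = some v) : IlkL c v [L] []
  | endR (v : V) (L : List V) (a : ℕ) (h : L.head? = some v)
      (h' : L.getLast? = some (c - 1, a)) : IlkL c v [L] [(a, none)]
  | cons (v : V) (L : List V) (a b : ℕ) (Ls : List (List V)) (σ : Sig)
      (h : L.head? = some v) (h' : L.getLast? = some (c - 1, a))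
      (ih : IlkL c (c - 1, b) Ls σ) : IlkL c v (L :: Ls) ((a, some b) :: σ)

inductive IlkR (c : ℕ) : List (List V) → Sig → Prop
  | nil : IlkR c [] []
  | endR (R : List V) (a : ℕ) (h : R.head? = some (c, a)) : IlkR c [R] [(a, none)]
  | cons (R : List V) (a b : ℕ) (Rs : List (List V)) (σ : Sig)
      (h : R.head? = some (c, a)) (h' : R.getLast? = some (c, b))
      (ih : IlkR c Rs σ) : IlkR c (R :: Rs) ((a, some b) :: σ)

lemma IlkL.head {c v Ls σ} (h : IlkL c v Ls σ) (Rs : List (List V)) :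
    (inter Ls Rs).head? = some v := by
  cases h with
  | last v L h => cases L with
      | nil => simp at h
      | cons a L => simp_all [inter]
  | endR v L a h h' => cases L with
      | nil => simp at h
      | cons a L => simp_all [inter]
  | cons v L a b Ls σ h h' ih => cases L with
      | nil => simp at h
      | cons a L => simp_all [inter]

lemma adjLR {c a : ℕ} (hc : 1 ≤ c) : adjPt (c - 1, a) (c, a) := by
  right; exact ⟨rfl, Or.inl (by omega)⟩
lemma adjRL {c b : ℕ} (hc : 1 ≤ c) : adjPt (c, b) (c - 1, b) := by
  right; exact ⟨rfl, Or.inr (by omega)⟩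

lemma glue_chain {c : ℕ} (hc : 1 ≤ c) {v : V} {Ls : List (List V)} {σ : Sig}
    (h1 : IlkL c v Ls σ) :
    ∀ {Rs : List (List V)}, IlkR c Rs σ → (∀ L ∈ Ls, L.Chain' adjPt) →
      (∀ R ∈ Rs, R.Chain' adjPt) → (inter Ls Rs).Chain' adjPt := by
  induction h1 with
  | last v L h =>
    intro Rs h2 hL hR
    cases h2
    simpa using hL L (by simp)
  | endR v L a h h' =>
    intro Rs h2 hL hR
    cases h2 with
    | endR R a hRh =>
      simp only [inter_cons, inter_nil, List.flatten_nil, List.append_nil]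
      simp only [List.Chain']
      rw [List.isChain_append]
      refine ⟨hL L (by simp), hR R (by simp), ?_⟩
      intro x hx y hy
      rw [h'] at hx; rw [hRh] at hy
      cases hx; cases hy
      exact adjLR hc
  | cons v L a b Ls σ h h' ih2 ih =>
    intro Rs h2 hL hR
    cases h2 with
    | cons R a b' Rs σ hRh hRl hRr =>
      simp only [inter_cons]
      simp only [List.Chain']
      rw [List.isChain_append]
      refine ⟨hL L (by simp), ?_, ?_⟩
      · rw [List.isChain_append]
        refine ⟨hR R (by simp), ih hRr (fun L hL' => hL L (by simp [hL'])) (fun R hR' => hR R (by simp [hR'])), ?_⟩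
        intro x hx y hy
        rw [hRl] at hx; cases hx
        rw [ih2.head] at hy; cases hy
        exact adjRL hc
      · intro x hx y hy
        rw [h'] at hx; cases hx
        rw [List.head?_append, hRh] at hy; cases hy
        exact adjLR hc


lemma inter_perm (xs ys : List (List V)) : (inter xs ys).Perm (xs.flatten ++ ys.flatten) := by
  induction xs, ys using inter.induct with
  | case1 ys => simp
  | case2 x xs ys ih =>
    simp only [inter_cons, List.flatten_cons]
    refine ((ih.append_left x).trans ?_)
    refine (List.perm_append_comm.append_left x).trans ?_
    rw [List.append_assoc]

def LeftObj (k c : ℕ) (σ : Sig) : Set (List (List V)) :=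
  {Ls | IlkL c (0, k - 1) Ls σ ∧ (∀ L ∈ Ls, L.Chain' adjPt) ∧ Ls.flatten.Nodup ∧
    ∀ v : V, v ∈ Ls.flatten ↔ v.1 < c ∧ v.2 < k}

def RightObj (k c n : ℕ) (σ : Sig) : Set (List (List V)) :=
  {Rs | IlkR c Rs σ ∧ (∀ R ∈ Rs, R.Chain' adjPt) ∧ Rs.flatten.Nodup ∧
    ∀ v : V, v ∈ Rs.flatten ↔ c ≤ v.1 ∧ v.1 < c + n ∧ v.2 < k}

theorem glue_mem {k c n : ℕ} (hc : 1 ≤ c) {σ : Sig} {Ls Rs : List (List V)}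
    (hL : Ls ∈ LeftObj k c σ) (hR : Rs ∈ RightObj k c n σ) :
    IsGreekKey k (c + n) (inter Ls Rs) := by
  obtain ⟨hL1, hL2, hL3, hL4⟩ := hL
  obtain ⟨hR1, hR2, hR3, hR4⟩ := hR
  have hperm := inter_perm Ls Rs
  refine ⟨hL1.head Rs, ?_, glue_chain hc hL1 hR1 hL2 hR2, ?_⟩
  · refine hperm.nodup_iff.mpr (List.nodup_append.mpr ⟨hL3, hR3, ?_⟩)
    rintro v hv _ hv' rfl
    have := (hL4 v).mp hv
    have := (hR4 v).mp hv'
    omega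
  · intro v
    rw [hperm.mem_iff, List.mem_append]
    constructor
    · rintro (h | h)
      · have := (hL4 v).mp h; omega
      · have := (hR4 v).mp h; omega
    · rintro ⟨h1, h2⟩
      by_cases hvc : v.1 < c
      · exact Or.inl ((hL4 v).mpr ⟨hvc, h2⟩)
      · exact Or.inr ((hR4 v).mpr ⟨by omega, h1, h2⟩)

/-- Crossing the boundary rightward. -/
lemma cross_right {c : ℕ} {x w : V} (hx : x.1 < c) (hw : ¬ w.1 < c) (h : adjPt x w) :
    x = (c - 1, x.2) ∧ w = (c, x.2) := by
  rcases h with ⟨h1, _⟩ | ⟨h1, h2 | h2⟩ <;>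
    refine ⟨?_, ?_⟩ <;> ext <;> simp <;> omega

lemma cross_left {c : ℕ} {y w : V} (hy : ¬ y.1 < c) (hw : w.1 < c) (h : adjPt y w) :
    y = (c, y.2) ∧ w = (c - 1, y.2) := by
  rcases h with ⟨h1, _⟩ | ⟨h1, h2 | h2⟩ <;>
    refine ⟨?_, ?_⟩ <;> ext <;> simp <;> omega

lemma split_core {c : ℕ} (hc : 1 ≤ c) :
    ∀ (N : ℕ) (l : List V), l.length ≤ N → l.Chain' adjPt → ∀ v : V, l.head? = some v → v.1 < c →
    ∃ (Ls Rs : List (List V)) (σ : Sig), IlkL c v Ls σ ∧ IlkR c Rs σ ∧ inter Ls Rs = l ∧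
      (∀ L ∈ Ls, L.Chain' adjPt) ∧ (∀ R ∈ Rs, R.Chain' adjPt) ∧
      (∀ u ∈ Ls.flatten, u.1 < c) ∧ (∀ u ∈ Rs.flatten, c ≤ u.1) := by
  intro N
  induction N with
  | zero => intro l hlen _ v hv _; cases l <;> simp_all
  | succ N IH =>
    intro l hlen hchain v hv hvc
    set p : V → Bool := fun u => decide (u.1 < c) with hp
    set L := l.takeWhile p with hLdef
    set r := l.dropWhile p with hrdef
    have htd : L ++ r = l := List.takeWhile_append_dropWhile ..
    have hLne : L ≠ [] := by
      cases l with
      | nil => simp at hv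
      | cons v0 t =>
        simp only [List.head?_cons, Option.some.injEq] at hv
        subst hv
        simp only [hLdef, List.takeWhile_cons, hp]
        rw [decide_eq_true hvc]
        simp
    have hLmem : ∀ u ∈ L, u.1 < c := fun u hu => by
      have := List.mem_takeWhile_imp hu; simpa [hp] using this
    have hLhead : L.head? = some v := by
      rw [← htd, List.head?_append] at hv
      cases hL : L.head? with
      | none => exact absurd (List.head?_eq_none_iff.mp hL) hLne
      | some x => rw [hL] at hv; simpa using hv
    have hchain2 := hchain
    simp only [List.Chain'] at hchain2
    rw [← htd, List.isChain_append] at hchain2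
    obtain ⟨hcL, hcr, hjun1⟩ := hchain2
    cases hr : r with
    | nil =>
      refine ⟨[L], [], [], IlkL.last v L hLhead, IlkR.nil, ?_, ?_, by simp, ?_, by simp⟩
      · simp [← htd, hr]
      · intro L' hL'; simp at hL'; subst hL'; exact hcL
      · simpa using hLmem
    | cons w r1 =>
      have hwr : r.head? = some w := by rw [hr]; simp
      have hwp : ¬ (w.1 < c) := by
        have := List.head?_dropWhile_not p l
        rw [← hrdef, hwr] at this
        simpa [hp] using this
      -- junction L -> r
      set x := L.getLast hLne with hxdef
      have hx : L.getLast? = some x := List.getLast?_eq_getLast hLne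
      have hxmem : x ∈ L := List.getLast_mem hLne
      have hxc : x.1 < c := hLmem x hxmem
      have hadj1 : adjPt x w := hjun1 x (by simp [hx]) w (by simp [hwr])
      obtain ⟨hxe, hwe⟩ := cross_right hxc hwp hadj1
      set q : V → Bool := fun u => decide (c ≤ u.1) with hq
      set R := r.takeWhile q with hRdef
      set r2 := r.dropWhile q with hr2def
      have htd2 : R ++ r2 = r := List.takeWhile_append_dropWhile ..
      have hqw : q w = true := by rw [hq]; exact decide_eq_true (by omega)
      have hRcons : R = w :: r1.takeWhile q := by
        rw [hRdef, hr, List.takeWhile_cons_of_pos hqw]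
      have hRne : R ≠ [] := by simp [hRcons]
      have hRmem : ∀ u ∈ R, c ≤ u.1 := fun u hu => by
        have := List.mem_takeWhile_imp hu; simpa [hq] using this
      have hRhead : R.head? = some w := by
        rw [← htd2, List.head?_append] at hwr
        cases hR0 : R.head? with
        | none => exact absurd (List.head?_eq_none_iff.mp hR0) hRne
        | some z => rw [hR0] at hwr; simpa using hwr
      have hchain3 := hcr
      rw [← htd2, List.isChain_append] at hchain3
      obtain ⟨hcR, hcr2, hjun2⟩ := hchain3
      cases hr2 : r2 with
      | nil =>
        have hRr : R = r := by rw [← htd2, hr2, List.append_nil]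
        refine ⟨[L], [R], [(x.2, none)], IlkL.endR v L x.2 hLhead (by rw [hx, hxe]),
          IlkR.endR R x.2 (by rw [hRhead, hwe]), ?_, ?_, ?_, ?_, ?_⟩
        · simp only [inter_cons, inter_nil, List.flatten_nil, List.append_nil, ← htd, hRr]
        · intro L' hL'; simp at hL'; subst hL'; exact hcL
        · intro R' hR'; simp at hR'; subst hR'; exact hcR
        · simpa using hLmem
        · simpa using hRmem
      | cons w2 r3 =>
        have hw2r : r2.head? = some w2 := by rw [hr2]; simp
        have hw2p : w2.1 < c := by
          have := List.head?_dropWhile_not q r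
          rw [← hr2def, hw2r] at this
          simpa [hq] using this
        set y := R.getLast hRne with hydef
        have hy : R.getLast? = some y := List.getLast?_eq_getLast hRne
        have hymem : y ∈ R := List.getLast_mem hRne
        have hyc : ¬ y.1 < c := by have := hRmem y hymem; omega
        have hadj2 : adjPt y w2 := hjun2 y (by simp [hy]) w2 (by simp [hw2r])
        obtain ⟨hye, hw2e⟩ := cross_left hyc hw2p hadj2
        have hlen2 : r2.length ≤ N := by
          have h1 : L.length + r.length = l.length := by rw [← htd]; simp
          have h2 : R.length + r2.length = r.length := by rw [← htd2]; simp
          have h3 : 1 ≤ L.length := List.length_pos_iff.mpr hLne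
          have h4 : 1 ≤ R.length := List.length_pos_iff.mpr hRne
          omega
        obtain ⟨Ls', Rs', σ', hIL, hIR, heq, hcLs, hcRs, hsL, hsR⟩ :=
          IH r2 hlen2 hcr2 w2 hw2r hw2p
        rw [hw2e] at hIL
        refine ⟨L :: Ls', R :: Rs', (x.2, some y.2) :: σ',
          IlkL.cons v L x.2 y.2 Ls' σ' hLhead (by rw [hx, hxe]) hIL,
          IlkR.cons R x.2 y.2 Rs' σ' (by rw [hRhead, hwe]) (by rw [hy, hye]) hIR, ?_, ?_, ?_, ?_, ?_⟩
        · rw [inter_cons, inter_cons, heq, htd2, htd]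
        · intro L' hL'
          rcases List.mem_cons.mp hL' with h | h
          · subst h; exact hcL
          · exact hcLs L' h
        · intro R' hR'
          rcases List.mem_cons.mp hR' with h | h
          · subst h; exact hcR
          · exact hcRs R' h
        · intro u hu
          rcases List.mem_flatten.mp hu with ⟨t, ht, hut⟩
          rcases List.mem_cons.mp ht with h | h
          · subst h; exact hLmem u hut
          · exact hsL u (List.mem_flatten.mpr ⟨t, h, hut⟩)
        · intro u hu
          rcases List.mem_flatten.mp hu with ⟨t, ht, hut⟩
          rcases List.mem_cons.mp ht with h | h
          · subst h; exact hRmem u hut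
          · exact hsR u (List.mem_flatten.mpr ⟨t, h, hut⟩)

lemma prefix_eq {α : Type*} (p : α → Bool) : ∀ (A B r s : List α),
    (∀ a ∈ A, p a = true) → (∀ b ∈ B, p b = true) →
    (∀ x ∈ r.head?, p x = false) → (∀ x ∈ s.head?, p x = false) →
    A ++ r = B ++ s → A = B ∧ r = s := by
  intro A
  induction A with
  | nil =>
    intro B r s _ hB hr _ h
    cases B with
    | nil => simpa using h
    | cons b B =>
      exfalso
      simp only [List.nil_append, List.cons_append] at h
      have hb : p b = false := hr b (by rw [h]; simp)
      have := hB b (by simp)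
      simp_all
  | cons a A ih =>
    intro B r s hA hB hr hs h
    cases B with
    | nil =>
      exfalso
      simp only [List.nil_append, List.cons_append] at h
      have hb : p a = false := hs a (by rw [← h]; simp)
      have := hA a (by simp)
      simp_all
    | cons b B =>
      simp only [List.cons_append, List.cons.injEq] at h
      obtain ⟨rfl, h2⟩ := h
      obtain ⟨h3, h4⟩ := ih B r s (fun x hx => hA x (by simp [hx])) (fun x hx => hB x (by simp [hx])) hr hs h2
      exact ⟨by rw [h3], h4⟩

lemma head?_ne_nil {α : Type*} {l : List α} {x : α} (h : l.head? = some x) : l ≠ [] := by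
  cases l <;> simp_all

lemma head?_append_of_some {α : Type*} {l : List α} {x : α} (h : l.head? = some x)
    (z : List α) : (l ++ z).head? = some x := by
  rw [List.head?_append, h]; rfl

lemma stepL {c : ℕ} {L L' t t' : List V} (hL : ∀ u ∈ L, u.1 < c) (hL' : ∀ u ∈ L', u.1 < c)
    (ht : ∀ x ∈ t.head?, ¬ x.1 < c) (ht' : ∀ x ∈ t'.head?, ¬ x.1 < c)
    (h : L ++ t = L' ++ t') : L = L' ∧ t = t' :=
  prefix_eq (fun u => decide (u.1 < c)) L L' t t'
    (fun u hu => decide_eq_true (hL u hu)) (fun u hu => decide_eq_true (hL' u hu))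
    (fun x hx => decide_eq_false (ht x hx)) (fun x hx => decide_eq_false (ht' x hx)) h

lemma stepR {c : ℕ} {R R' t t' : List V} (hR : ∀ u ∈ R, c ≤ u.1) (hR' : ∀ u ∈ R', c ≤ u.1)
    (ht : ∀ x ∈ t.head?, x.1 < c) (ht' : ∀ x ∈ t'.head?, x.1 < c)
    (h : R ++ t = R' ++ t') : R = R' ∧ t = t' :=
  prefix_eq (fun u => decide (c ≤ u.1)) R R' t t'
    (fun u hu => decide_eq_true (hR u hu)) (fun u hu => decide_eq_true (hR' u hu))
    (fun x hx => decide_eq_false (by have := ht x hx; omega))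
    (fun x hx => decide_eq_false (by have := ht' x hx; omega)) h

lemma inter_ne_nil {c : ℕ} {v : V} {Ls : List (List V)} {σ : Sig} (h : IlkL c v Ls σ)
    (Rs : List (List V)) : inter Ls Rs ≠ [] := fun hh => by
  have := h.head Rs
  rw [hh] at this
  simp at this

lemma glue_unique {c : ℕ} (hc : 1 ≤ c) {v : V} {Ls : List (List V)} {σ : Sig}
    (h1 : IlkL c v Ls σ) :
    ∀ {Rs : List (List V)}, IlkR c Rs σ →
    (∀ u ∈ Ls.flatten, u.1 < c) → (∀ u ∈ Rs.flatten, c ≤ u.1) →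
    ∀ {v' : V} {Ls' : List (List V)} {σ' : Sig} {Rs' : List (List V)},
    IlkL c v' Ls' σ' → IlkR c Rs' σ' →
    (∀ u ∈ Ls'.flatten, u.1 < c) → (∀ u ∈ Rs'.flatten, c ≤ u.1) →
    inter Ls Rs = inter Ls' Rs' → Ls = Ls' ∧ σ = σ' ∧ Rs = Rs' := by
  induction h1 with
  | last v L h =>
    intro Rs h2 hsL hsR v' Ls' σ' Rs' h1' h2' hsL' hsR' heq
    cases h2
    have hL : ∀ u ∈ L, u.1 < c := fun u hu => hsL u (by simpa using hu)
    cases h1' with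
    | last v2 L' hLh' =>
      cases h2'
      simp only [inter_cons, inter_nil, List.flatten_nil, List.append_nil] at heq
      exact ⟨by rw [heq], rfl, rfl⟩
    | endR v2 L' a2 hLh' hLl' =>
      cases h2' with
      | endR R2 a9 hRh2 =>
        exfalso
        simp only [inter_cons, inter_nil, List.flatten_nil, List.append_nil] at heq
        have := stepL hL (fun u hu => hsL' u (by simpa using hu))
          (by simp) (fun x hx => by rw [hRh2] at hx; cases hx; omega)
          (show L ++ [] = L' ++ R2 by simpa using heq)
        exact head?_ne_nil hRh2 this.2.symm
    | cons v2 L' a2 b2 Ls₂' σ3 hLh' hLl' hI2 =>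
      cases h2' with
      | cons R2 a9 b9 Rs3 σ9 hRh2 hRl2 hRr2 =>
        exfalso
        simp only [inter_cons, inter_nil, List.flatten_nil, List.append_nil] at heq
        have := stepL hL (fun u hu => hsL' u (by simp only [List.flatten_cons, List.mem_append]; exact Or.inl hu))
          (by simp) (fun x hx => by rw [head?_append_of_some hRh2] at hx; cases hx; omega)
          (show L ++ [] = L' ++ (R2 ++ inter Ls₂' Rs3) by simpa using heq)
        have h9 := this.2.symm
        rw [List.append_eq_nil_iff] at h9
        exact head?_ne_nil hRh2 h9.1
  | endR v L a h h' =>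
    intro Rs h2 hsL hsR v' Ls' σ' Rs' h1' h2' hsL' hsR' heq
    cases h2 with
    | endR R a9 hRh =>
    have hL : ∀ u ∈ L, u.1 < c := fun u hu => hsL u (by simpa using hu)
    have hR : ∀ u ∈ R, c ≤ u.1 := fun u hu => hsR u (by simpa using hu)
    cases h1' with
    | last v2 L' hLh' =>
      cases h2'
      exfalso
      simp only [inter_cons, inter_nil, List.flatten_nil, List.append_nil] at heq
      have := stepL hL (fun u hu => hsL' u (by simpa using hu))
        (fun x hx => by rw [hRh] at hx; cases hx; omega) (by simp)
        (show L ++ R = L' ++ [] by simpa using heq)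
      exact head?_ne_nil hRh this.2
    | endR v2 L' a2 hLh' hLl' =>
      cases h2' with
      | endR R2 a9 hRh2 =>
        simp only [inter_cons, inter_nil, List.flatten_nil, List.append_nil] at heq
        have hst := stepL hL (fun u hu => hsL' u (by simpa using hu))
          (fun x hx => by rw [hRh] at hx; cases hx; omega)
          (fun x hx => by rw [hRh2] at hx; cases hx; omega)
          heq
        obtain ⟨e1, e2⟩ := hst
        have : a = a2 := by
          rw [e2, hRh2] at hRh
          cases hRh
          rfl
        subst this e1 e2
        exact ⟨rfl, rfl, rfl⟩
    | cons v2 L' a2 b2 Ls₂' σ3 hLh' hLl' hI2 =>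
      cases h2' with
      | cons R2 a9 b9 Rs3 σ9 hRh2 hRl2 hRr2 =>
        exfalso
        simp only [inter_cons, inter_nil, List.flatten_nil, List.append_nil] at heq
        have hst := stepL hL (fun u hu => hsL' u (by simp only [List.flatten_cons, List.mem_append]; exact Or.inl hu))
          (fun x hx => by rw [hRh] at hx; cases hx; omega)
          (fun x hx => by rw [head?_append_of_some hRh2] at hx; cases hx; omega)
          heq
        have hst2 := stepR hR (fun u hu => hsR' u (by simp only [List.flatten_cons, List.mem_append]; exact Or.inl hu))
          (by simp)
          (fun x hx => by rw [hI2.head] at hx; cases hx; simp; omega)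
          (show R ++ [] = R2 ++ inter Ls₂' Rs3 by simpa using hst.2)
        exact inter_ne_nil hI2 Rs3 hst2.2.symm
  | cons v L a b Ls σ h h' hI ih =>
    intro Rs h2 hsL hsR v' Ls' σ' Rs' h1' h2' hsL' hsR' heq
    cases h2 with
    | cons R a9 b9 Rs₂ σ9 hRh hRl hRr =>
    have hL : ∀ u ∈ L, u.1 < c := fun u hu => hsL u (by simp only [List.flatten_cons, List.mem_append]; exact Or.inl hu)
    have hR : ∀ u ∈ R, c ≤ u.1 := fun u hu => hsR u (by simp only [List.flatten_cons, List.mem_append]; exact Or.inl hu)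
    cases h1' with
    | last v2 L' hLh' =>
      cases h2'
      exfalso
      simp only [inter_cons, inter_nil, List.flatten_nil, List.append_nil] at heq
      have := stepL hL (fun u hu => hsL' u (by simpa using hu))
        (fun x hx => by rw [head?_append_of_some hRh] at hx; cases hx; omega) (by simp)
        (show L ++ (R ++ inter Ls Rs₂) = L' ++ [] by simpa using heq)
      have h9 := this.2
      rw [List.append_eq_nil_iff] at h9
      exact head?_ne_nil hRh h9.1
    | endR v2 L' a2 hLh' hLl' =>
      cases h2' with
      | endR R2 a9 hRh2 =>
        exfalso
        simp only [inter_cons, inter_nil, List.flatten_nil, List.append_nil] at heq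
        have hst := stepL hL (fun u hu => hsL' u (by simpa using hu))
          (fun x hx => by rw [head?_append_of_some hRh] at hx; cases hx; omega)
          (fun x hx => by rw [hRh2] at hx; cases hx; omega)
          heq
        have hst2 := stepR hR (fun u hu => hsR' u (by simpa using hu))
          (fun x hx => by rw [hI.head] at hx; cases hx; simp; omega)
          (by simp)
          (show R ++ inter Ls Rs₂ = R2 ++ [] by simpa using hst.2)
        exact inter_ne_nil hI Rs₂ hst2.2
    | cons v2 L' a2 b2 Ls₂' σ3 hLh' hLl' hI2 =>
      cases h2' with
      | cons R2 a9 b9 Rs3 σ9 hRh2 hRl2 hRr2 =>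
        simp only [inter_cons, inter_nil, List.flatten_nil, List.append_nil] at heq
        have hst := stepL hL (fun u hu => hsL' u (by simp only [List.flatten_cons, List.mem_append]; exact Or.inl hu))
          (fun x hx => by rw [head?_append_of_some hRh] at hx; cases hx; omega)
          (fun x hx => by rw [head?_append_of_some hRh2] at hx; cases hx; omega)
          heq
        obtain ⟨e1, e2⟩ := hst
        have hst2 := stepR hR (fun u hu => hsR' u (by simp only [List.flatten_cons, List.mem_append]; exact Or.inl hu))
          (fun x hx => by rw [hI.head] at hx; cases hx; simp; omega)
          (fun x hx => by rw [hI2.head] at hx; cases hx; simp; omega)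
          e2
        obtain ⟨e3, e4⟩ := hst2
        have ha : a = a2 := by
          rw [e3, hRh2] at hRh
          cases hRh
          rfl
        have hb : b = b2 := by
          rw [e3, hRl2] at hRl
          cases hRl
          rfl
        subst ha hb
        obtain ⟨f1, f2, f3⟩ := ih hRr
          (fun u hu => hsL u (by simp only [List.flatten_cons, List.mem_append]; exact Or.inr hu))
          (fun u hu => hsR u (by simp only [List.flatten_cons, List.mem_append]; exact Or.inr hu))
          hI2 hRr2
          (fun u hu => hsL' u (by simp only [List.flatten_cons, List.mem_append]; exact Or.inr hu))
          (fun u hu => hsR' u (by simp only [List.flatten_cons, List.mem_append]; exact Or.inr hu))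
          e4
        subst f1 f2 f3 e1 e3
        exact ⟨rfl, rfl, rfl⟩

/-! ### Signature bounds and finiteness -/

/-- Lists of length at most `N` with entries in `A`. -/
def listsLE {α : Type*} [DecidableEq α] (A : Finset α) : ℕ → Finset (List α)
  | 0 => {[]}
  | N + 1 => {[]} ∪ (A ×ˢ listsLE A N).image (fun p => p.1 :: p.2)

lemma mem_listsLE {α : Type*} [DecidableEq α] (A : Finset α) :
    ∀ (N : ℕ) (l : List α), l ∈ listsLE A N ↔ l.length ≤ N ∧ ∀ x ∈ l, x ∈ A := by
  intro N
  induction N with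
  | zero => intro l; cases l <;> simp [listsLE]
  | succ N ih =>
    intro l
    cases l with
    | nil => simp [listsLE]
    | cons x t =>
      simp only [listsLE, Finset.mem_union, Finset.mem_singleton, Finset.mem_image,
        Finset.mem_product, Prod.exists]
      constructor
      · rintro (h | ⟨a, b, ⟨ha, hb⟩, h⟩)
        · simp at h
        · rw [← h]
          have := (ih b).mp hb
          refine ⟨by simp; omega, ?_⟩
          intro y hy
          rcases List.mem_cons.mp hy with rfl | hy
          · exact ha
          · exact this.2 y hy
      · rintro ⟨h1, h2⟩
        right
        exact ⟨x, t, ⟨h2 x (by simp), (ih t).mpr ⟨by simpa using h1, fun y hy => h2 y (by simp [hy])⟩⟩, rfl⟩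

/-- The finite set of admissible signatures. -/
def BigS (k : ℕ) : Finset Sig :=
  listsLE ((Finset.range k) ×ˢ (Finset.insertNone (Finset.range k))) k

lemma mem_BigS {k : ℕ} {σ : Sig} :
    σ ∈ BigS k ↔ σ.length ≤ k ∧ ∀ x ∈ σ, x.1 < k ∧ ∀ b ∈ x.2, b < k := by
  rw [BigS, mem_listsLE]
  apply and_congr Iff.rfl
  apply forall_congr'
  intro x
  apply imp_congr Iff.rfl
  rw [Finset.mem_product, Finset.mem_range]
  apply and_congr Iff.rfl
  cases x.2 <;> simp

/-- Finiteness of bounded-length lists over a finite set. -/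
lemma finite_lists {α : Type*} {S : Set α} (hS : S.Finite) :
    ∀ N : ℕ, {l : List α | l.length ≤ N ∧ ∀ v ∈ l, v ∈ S}.Finite := by
  intro N
  induction N with
  | zero =>
    apply Set.Finite.subset (Set.finite_singleton ([] : List α))
    rintro l ⟨h1, _⟩
    simp only [Set.mem_singleton_iff]
    exact List.length_eq_zero_iff.mp (by omega)
  | succ N ih =>
    apply Set.Finite.subset (Set.Finite.insert []
      (Set.Finite.image (fun p : α × List α => p.1 :: p.2) (hS.prod ih)))
    rintro l ⟨h1, h2⟩
    cases l with
    | nil => simp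
    | cons x t =>
      right
      exact ⟨(x, t), ⟨h2 x (by simp), by simpa using h1, fun v hv => h2 v (by simp [hv])⟩, rfl⟩

lemma nodup_length_le {α : Type*} [DecidableEq α] {l : List α} (h : l.Nodup) (A : Finset α)
    (hsub : ∀ v ∈ l, v ∈ A) : l.length ≤ A.card := by
  have h1 : l.toFinset.card = l.length := List.toFinset_card_of_nodup h
  have h2 : l.toFinset ⊆ A := fun x hx => hsub x (List.mem_toFinset.mp hx)
  have := Finset.card_le_card h2
  omega

lemma IlkR.length {c : ℕ} {Rs : List (List V)} {σ : Sig} (h : IlkR c Rs σ) :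
    Rs.length = σ.length := by
  induction h <;> simp_all

lemma IlkL.length_le {c : ℕ} {v : V} {Ls : List (List V)} {σ : Sig} (h : IlkL c v Ls σ) :
    Ls.length ≤ σ.length + 1 := by
  induction h <;> simp_all

lemma sig_heads {c : ℕ} {Rs : List (List V)} {σ : Sig} (h : IlkR c Rs σ) :
    Rs.flatten.Nodup → (σ.map Prod.fst).Nodup ∧
      ∀ x ∈ σ.map Prod.fst, ((c : ℕ), x) ∈ Rs.flatten := by
  induction h with
  | nil => simp
  | endR R a hRh =>
    intro _
    refine ⟨by simp, ?_⟩
    intro x hx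
    simp only [List.map_cons, List.map_nil, List.mem_singleton] at hx
    subst hx
    simp only [List.flatten_cons, List.flatten_nil, List.append_nil]
    exact List.mem_of_mem_head? (by rw [hRh]; rfl)
  | cons R a b Rs σ hRh hRl hIR ih =>
    intro hnd
    simp only [List.flatten_cons, List.nodup_append] at hnd
    obtain ⟨hnd1, hnd2, hdisj⟩ := hnd
    obtain ⟨ih1, ih2⟩ := ih hnd2
    have hmem : ((c : ℕ), a) ∈ R := List.mem_of_mem_head? (by rw [hRh]; rfl)
    refine ⟨?_, ?_⟩
    · simp only [List.map_cons, List.nodup_cons]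
      refine ⟨fun hc2 => ?_, ih1⟩
      exact hdisj _ hmem _ (ih2 a hc2) rfl
    · intro x hx
      simp only [List.map_cons, List.mem_cons] at hx
      rcases hx with rfl | hx
      · exact List.mem_append.mpr (Or.inl hmem)
      · exact List.mem_append.mpr (Or.inr (ih2 x hx))

lemma sig_snd_mem {c : ℕ} {Rs : List (List V)} {σ : Sig} (h : IlkR c Rs σ) :
    ∀ p ∈ σ, ∀ b ∈ p.2, ((c : ℕ), b) ∈ Rs.flatten := by
  induction h with
  | nil => simp
  | endR R a hRh => simp
  | cons R a b Rs σ hRh hRl hIR ih =>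
    intro p hp b' hb'
    simp only [List.mem_cons] at hp
    simp only [List.flatten_cons, List.mem_append]
    rcases hp with rfl | hp
    · simp only [Option.mem_def, Option.some.injEq] at hb'
      subst hb'
      exact Or.inl (List.mem_of_mem_getLast? (by rw [hRl]; rfl))
    · exact Or.inr (ih p hp b' hb')

lemma sig_mem_BigS {k c n : ℕ} {σ : Sig} {Rs : List (List V)}
    (hR : Rs ∈ RightObj k c n σ) : σ ∈ BigS k := by
  obtain ⟨h1, _, h3, h4⟩ := hR
  obtain ⟨hh1, hh2⟩ := sig_heads h1 h3
  rw [mem_BigS]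
  constructor
  · have hlen := nodup_length_le hh1 (Finset.range k)
      (fun x hx => Finset.mem_range.mpr ((h4 _).mp (hh2 x hx)).2.2)
    rw [Finset.card_range] at hlen
    simpa using hlen
  · intro x hx
    constructor
    · have := (h4 _).mp (hh2 x.1 (List.mem_map.mpr ⟨x, hx, rfl⟩))
      exact this.2.2
    · intro b hb
      have := (h4 _).mp (sig_snd_mem h1 x hx b hb)
      exact this.2.2

lemma RightObj_finite (k c n : ℕ) (σ : Sig) : (RightObj k c n σ).Finite := by
  set A : Finset V := Finset.range (c + n) ×ˢ Finset.range k with hA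
  have hgfin : ({v : V | c ≤ v.1 ∧ v.1 < c + n ∧ v.2 < k}).Finite := by
    apply Set.Finite.subset (Set.Finite.ofFinset A (fun x => Iff.rfl) : (↑A : Set V).Finite)
    rintro v ⟨hv1, hv2, hv3⟩
    simp only [hA, Finset.coe_product, Set.mem_prod, Finset.mem_coe, Finset.mem_range]
    exact ⟨by omega, hv3⟩
  apply Set.Finite.subset (finite_lists (finite_lists hgfin A.card) (σ.length + 1))
  rintro Rs ⟨h1, h2, h3, h4⟩
  refine ⟨by rw [h1.length]; omega, ?_⟩
  intro R hR
  refine ⟨?_, fun v hv => (h4 v).mp (List.mem_flatten.mpr ⟨R, hR, hv⟩)⟩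
  apply nodup_length_le ((List.sublist_flatten_of_mem hR).nodup h3) A
  intro v hv
  have := (h4 v).mp (List.mem_flatten.mpr ⟨R, hR, hv⟩)
  simp only [hA, Finset.mem_product, Finset.mem_range]
  exact ⟨by omega, this.2.2⟩

lemma LeftObj_finite (k c : ℕ) (σ : Sig) : (LeftObj k c σ).Finite := by
  set A : Finset V := Finset.range c ×ˢ Finset.range k with hA
  have hgfin : ({v : V | v.1 < c ∧ v.2 < k}).Finite := by
    apply Set.Finite.subset (Set.Finite.ofFinset A (fun x => Iff.rfl) : (↑A : Set V).Finite)
    intro v hv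
    simp only [hA, Finset.coe_product, Set.mem_prod, Finset.mem_coe, Finset.mem_range]
    exact ⟨hv.1, hv.2⟩
  apply Set.Finite.subset (finite_lists (finite_lists hgfin A.card) (σ.length + 1))
  rintro Ls ⟨h1, h2, h3, h4⟩
  refine ⟨h1.length_le, ?_⟩
  intro L hL
  refine ⟨?_, fun v hv => (h4 v).mp (List.mem_flatten.mpr ⟨L, hL, hv⟩)⟩
  apply nodup_length_le ((List.sublist_flatten_of_mem hL).nodup h3) A
  intro v hv
  have := (h4 v).mp (List.mem_flatten.mpr ⟨L, hL, hv⟩)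
  simp only [hA, Finset.mem_product, Finset.mem_range]
  exact ⟨this.1, this.2⟩

lemma tours_finite (k n : ℕ) : {l : List V | IsGreekKey k n l}.Finite := by
  set A : Finset V := Finset.range n ×ˢ Finset.range k with hA
  have hgfin : ({v : V | v.1 < n ∧ v.2 < k}).Finite := by
    apply Set.Finite.subset (Set.Finite.ofFinset A (fun x => Iff.rfl) : (↑A : Set V).Finite)
    intro v hv
    simp only [hA, Finset.coe_product, Set.mem_prod, Finset.mem_coe, Finset.mem_range]
    exact ⟨hv.1, hv.2⟩
  apply Set.Finite.subset (finite_lists hgfin A.card)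
  rintro l ⟨_, h2, _, h4⟩
  refine ⟨?_, fun v hv => (h4 v).mp hv⟩
  apply nodup_length_le h2 A
  intro v hv
  have := (h4 v).mp hv
  simp only [hA, Finset.mem_product, Finset.mem_range]
  exact ⟨this.1, this.2⟩

/-! ### The cut-and-glue bijection -/

theorem split_tour {k c n : ℕ} (hc : 1 ≤ c) {l : List V} (hl : IsGreekKey k (c + n) l) :
    ∃ σ Ls Rs, σ ∈ BigS k ∧ Ls ∈ LeftObj k c σ ∧ Rs ∈ RightObj k c n σ ∧ inter Ls Rs = l := by
  obtain ⟨hhead, hnd, hch, hcov⟩ := hl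
  obtain ⟨Ls, Rs, σ, hIL, hIR, heq, hcLs, hcRs, hsL, hsR⟩ :=
    split_core hc l.length l le_rfl hch (0, k-1) hhead (show 0 < c by omega)
  have hperm : l.Perm (Ls.flatten ++ Rs.flatten) := heq ▸ inter_perm Ls Rs
  have hnd2 : (Ls.flatten ++ Rs.flatten).Nodup := hperm.nodup hnd
  rw [List.nodup_append] at hnd2
  have memiff : ∀ v : V, v ∈ l ↔ v ∈ Ls.flatten ∨ v ∈ Rs.flatten := by
    intro v
    rw [hperm.mem_iff, List.mem_append]
  have hLmem : Ls ∈ LeftObj k c σ := by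
    refine ⟨hIL, hcLs, hnd2.1, ?_⟩
    intro v
    constructor
    · intro hv
      exact ⟨hsL v hv, ((hcov v).mp ((memiff v).mpr (Or.inl hv))).2⟩
    · rintro ⟨h1, h2⟩
      have : v ∈ l := (hcov v).mpr ⟨by omega, h2⟩
      rcases (memiff v).mp this with h | h
      · exact h
      · exact absurd (hsR v h) (by omega)
  have hRmem : Rs ∈ RightObj k c n σ := by
    refine ⟨hIR, hcRs, hnd2.2.1, ?_⟩
    intro v
    constructor
    · intro hv
      have := (hcov v).mp ((memiff v).mpr (Or.inr hv))
      exact ⟨hsR v hv, this.1, this.2⟩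
    · rintro ⟨h1, h2, h3⟩
      have : v ∈ l := (hcov v).mpr ⟨h2, h3⟩
      rcases (memiff v).mp this with h | h
      · exact absurd (hsL v h) (by omega)
      · exact h
  exact ⟨σ, Ls, Rs, sig_mem_BigS hRmem, hLmem, hRmem, heq⟩

def TourSet (k n : ℕ) : Set (List V) := {l | IsGreekKey k n l}

noncomputable def glueEquiv (k c n : ℕ) (hc : 1 ≤ c) :
    (Σ σ : (BigS k : Finset Sig), (LeftObj k c σ.1 : Set _) × (RightObj k c n σ.1 : Set _)) ≃
      (TourSet k (c + n) : Set _) := by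
  apply Equiv.ofBijective
    (fun x => (⟨inter x.2.1.1 x.2.2.1, glue_mem hc x.2.1.2 x.2.2.2⟩ :
      (TourSet k (c + n) : Set _)))
  constructor
  · rintro ⟨⟨σ, hσ⟩, ⟨Ls, hLs⟩, ⟨Rs, hRs⟩⟩ ⟨⟨σ', hσ'⟩, ⟨Ls', hLs'⟩, ⟨Rs', hRs'⟩⟩ h
    simp only [Subtype.mk.injEq] at h
    obtain ⟨e1, e2, e3⟩ := glue_unique hc hLs.1 hRs.1
      (fun u hu => ((hLs.2.2.2 u).mp hu).1)
      (fun u hu => ((hRs.2.2.2 u).mp hu).1)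
      hLs'.1 hRs'.1
      (fun u hu => ((hLs'.2.2.2 u).mp hu).1)
      (fun u hu => ((hRs'.2.2.2 u).mp hu).1)
      (congrArg Subtype.val h)
    subst e1 e2 e3
    rfl
  · rintro ⟨l, hl⟩
    obtain ⟨σ, Ls, Rs, hσ, hLm, hRm, heq⟩ := split_tour hc hl
    exact ⟨⟨⟨σ, hσ⟩, ⟨Ls, hLm⟩, ⟨Rs, hRm⟩⟩, Subtype.ext heq⟩

lemma nat_card_sigma {ι : Type*} [Fintype ι] (f : ι → Type*) [hf : ∀ i, Finite (f i)] :
    Nat.card (Σ i, f i) = ∑ i, Nat.card (f i) := by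
  classical
  letI : ∀ i, Fintype (f i) := fun i => Fintype.ofFinite _
  simp [Nat.card_eq_fintype_card, Fintype.card_sigma]

lemma count_eq (k c n : ℕ) (hc : 1 ≤ c) :
    greekKeyCount k (c + n) =
      ∑ σ ∈ BigS k, (LeftObj k c σ).ncard * (RightObj k c n σ).ncard := by
  classical
  have hcn : c + n ≠ 0 := by omega
  rw [greekKeyCount, if_neg hcn]
  letI : ∀ σ : (BigS k : Finset Sig), Finite ((LeftObj k c σ.1 : Set _) × (RightObj k c n σ.1 : Set _)) :=
    fun σ => by
      have h1 := (LeftObj_finite k c σ.1).to_subtype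
      have h2 := (RightObj_finite k c n σ.1).to_subtype
      exact Finite.instProd
  calc Set.ncard {l : List (ℕ × ℕ) | IsGreekKey k (c + n) l}
      = Nat.card (TourSet k (c + n) : Set _) := (Nat.card_coe_set_eq _).symm
    _ = Nat.card (Σ σ : (BigS k : Finset Sig), (LeftObj k c σ.1 : Set _) × (RightObj k c n σ.1 : Set _)) :=
        (Nat.card_congr (glueEquiv k c n hc)).symm
    _ = ∑ σ : (BigS k : Finset Sig), Nat.card ((LeftObj k c σ.1 : Set _) × (RightObj k c n σ.1 : Set _)) :=
        nat_card_sigma _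
    _ = ∑ σ ∈ BigS k, (LeftObj k c σ).ncard * (RightObj k c n σ).ncard := by
        rw [← Finset.sum_coe_sort (BigS k) (fun σ => (LeftObj k c σ).ncard * (RightObj k c n σ).ncard)]
        apply Finset.sum_congr rfl
        intro σ _
        rw [Nat.card_prod, Nat.card_coe_set_eq, Nat.card_coe_set_eq]

/-! ### Translation invariance of right objects -/

def shiftV (d : ℕ) (v : V) : V := (v.1 + d, v.2)
def unshiftV (d : ℕ) (v : V) : V := (v.1 - d, v.2)

lemma shiftV_injective (d : ℕ) : Function.Injective (shiftV d) := by
  intro u v h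
  simp only [shiftV, Prod.ext_iff] at h ⊢
  omega

lemma chain'_imp_mem {α : Type*} {R S : α → α → Prop} :
    ∀ {l : List α}, (∀ a ∈ l, ∀ b ∈ l, R a b → S a b) → l.Chain' R → l.Chain' S := by
  intro l
  induction l with
  | nil => intro _ _; exact List.IsChain.nil
  | cons x t ih =>
    intro h hc
    simp only [List.Chain'] at hc ⊢
    rw [List.isChain_cons] at hc ⊢
    refine ⟨?_, ih (fun a ha b hb => h a (by simp [ha]) b (by simp [hb])) hc.2⟩
    intro y hy
    exact h x (by simp) y (by simp [List.mem_of_mem_head? hy]) (hc.1 y hy)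

lemma adj_shift {d : ℕ} {u v : V} (h : adjPt u v) : adjPt (shiftV d u) (shiftV d v) := by
  simp only [adjPt, shiftV] at h ⊢
  omega

lemma adj_unshift {d : ℕ} {u v : V} (hu : d ≤ u.1) (hv : d ≤ v.1) (h : adjPt u v) :
    adjPt (unshiftV d u) (unshiftV d v) := by
  simp only [adjPt, unshiftV] at h ⊢
  omega

lemma IlkR_up {c n : ℕ} {Rs : List (List V)} {σ : Sig} (h : IlkR 0 Rs σ) :
    IlkR c (Rs.map (List.map (shiftV c))) σ := by
  induction h with
  | nil => exact IlkR.nil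
  | endR R a hRh =>
    refine IlkR.endR _ a ?_
    rw [List.head?_map, hRh]
    simp [shiftV]
  | cons R a b Rs σ hRh hRl hIR ih =>
    refine IlkR.cons _ a b _ σ ?_ ?_ ih
    · rw [List.head?_map, hRh]; simp [shiftV]
    · rw [List.getLast?_map, hRl]; simp [shiftV]

lemma IlkR_down {c n : ℕ} {Rs : List (List V)} {σ : Sig} (h : IlkR c Rs σ) :
    IlkR 0 (Rs.map (List.map (unshiftV c))) σ := by
  induction h with
  | nil => exact IlkR.nil
  | endR R a hRh =>
    refine IlkR.endR _ a ?_
    rw [List.head?_map, hRh]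
    simp [unshiftV]
  | cons R a b Rs σ hRh hRl hIR ih =>
    refine IlkR.cons _ a b _ σ ?_ ?_ ih
    · rw [List.head?_map, hRh]; simp [unshiftV]
    · rw [List.getLast?_map, hRl]; simp [unshiftV]

lemma right_shift_ncard (k c n : ℕ) (σ : Sig) :
    (RightObj k c n σ).ncard = (RightObj k 0 n σ).ncard := by
  have hinj : Function.Injective (fun Rs : List (List V) => Rs.map (List.map (shiftV c))) :=
    List.map_injective_iff.mpr (List.map_injective_iff.mpr (shiftV_injective c))
  have himg : RightObj k c n σ =
      (fun Rs : List (List V) => Rs.map (List.map (shiftV c))) '' (RightObj k 0 n σ) := by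
    apply Set.eq_of_subset_of_subset
    · -- down then up
      rintro Rs ⟨h1, h2, h3, h4⟩
      refine ⟨Rs.map (List.map (unshiftV c)), ⟨IlkR_down (n := n) h1, ?_, ?_, ?_⟩, ?_⟩
      · intro R hR
        rcases List.mem_map.mp hR with ⟨R₀, hR₀, rfl⟩
        simp only [List.Chain']
        rw [List.isChain_map]
        apply chain'_imp_mem ?_ (h2 R₀ hR₀)
        intro a ha b hb hab
        have ha' := ((h4 a).mp (List.mem_flatten.mpr ⟨R₀, hR₀, ha⟩)).1
        have hb' := ((h4 b).mp (List.mem_flatten.mpr ⟨R₀, hR₀, hb⟩)).1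
        exact adj_unshift ha' hb' hab
      · rw [← List.map_flatten]
        apply List.Nodup.map_on ?_ h3
        intro x hx y hy hxy
        have hx' := ((h4 x).mp hx).1
        have hy' := ((h4 y).mp hy).1
        simp only [unshiftV, Prod.ext_iff] at hxy ⊢
        constructor
        · omega
        · exact hxy.2
      · intro v
        rw [← List.map_flatten, List.mem_map]
        constructor
        · rintro ⟨u, hu, rfl⟩
          have := (h4 u).mp hu
          simp only [unshiftV]
          omega
        · rintro ⟨h5, h6, h7⟩
          refine ⟨(v.1 + c, v.2), (h4 _).mpr ⟨by omega, by omega, h7⟩, ?_⟩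
          simp only [unshiftV, Prod.ext_iff]
          exact ⟨by omega, trivial⟩
      · -- maps back
        have hback : ∀ R ∈ Rs, List.map (shiftV c) (List.map (unshiftV c) R) = R := by
          intro R hR
          rw [List.map_map]
          conv_rhs => rw [← List.map_id R]
          apply List.map_congr_left
          intro u hu
          have := ((h4 u).mp (List.mem_flatten.mpr ⟨R, hR, hu⟩)).1
          simp only [Function.comp, shiftV, unshiftV, id, Prod.ext_iff]
          exact ⟨by omega, trivial⟩
        simp only [List.map_map]
        conv_rhs => rw [← List.map_id Rs]
        apply List.map_congr_left
        intro R hR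
        simpa [Function.comp] using hback R hR
    · rintro Rs ⟨Rs₀, ⟨h1, h2, h3, h4⟩, rfl⟩
      refine ⟨IlkR_up (n := n) h1, ?_, ?_, ?_⟩
      · intro R hR
        rcases List.mem_map.mp hR with ⟨R₀, hR₀, rfl⟩
        simp only [List.Chain']
        rw [List.isChain_map]
        exact List.IsChain.imp (fun a b hab => adj_shift hab) (h2 R₀ hR₀)
      · rw [← List.map_flatten]
        exact List.Nodup.map_on (fun x _ y _ h => shiftV_injective c h) h3
      · intro v
        rw [← List.map_flatten, List.mem_map]
        constructor
        · rintro ⟨u, hu, rfl⟩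
          have := (h4 u).mp hu
          simp only [shiftV]
          omega
        · rintro ⟨h5, h6, h7⟩
          refine ⟨(v.1 - c, v.2), (h4 _).mpr ⟨by omega, by omega, h7⟩, ?_⟩
          simp only [shiftV, Prod.ext_iff]
          exact ⟨by omega, trivial⟩
  rw [himg, Set.ncard_image_of_injective _ hinj]

/-! ### The linear recurrence -/

noncomputable def rho (k : ℕ) (σ : Sig) : ℕ → ℚ := fun n => ((RightObj k 0 n σ).ncard : ℚ)

noncomputable def lam (k c : ℕ) (σ : Sig) : ℚ := ((LeftObj k c σ).ncard : ℚ)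

lemma key_identity (k c : ℕ) (hc : 1 ≤ c) (n : ℕ) :
    (greekKeyCount k (c + n) : ℚ) = ∑ σ ∈ BigS k, lam k c σ * rho k σ n := by
  rw [count_eq k c n hc]
  push_cast
  apply Finset.sum_congr rfl
  intro σ _
  rw [lam, rho, right_shift_ncard]

theorem exists_linear_recurrence (k : ℕ) :
    ∃ (D : ℕ) (coeff : ℕ → ℚ), coeff D ≠ 0 ∧
      ∀ n : ℕ, ∑ i ∈ Finset.range (D + 1), coeff i * (greekKeyCount k (i + 1 + n) : ℚ) = 0 := by
  classical
  set S := (BigS k).card with hS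
  set W : Submodule ℚ (ℕ → ℚ) :=
    Submodule.span ℚ ((fun σ => rho k σ) '' ((BigS k : Finset Sig) : Set Sig)) with hW
  have hWfin : FiniteDimensional ℚ W :=
    FiniteDimensional.span_of_finite ℚ ((BigS k).finite_toSet.image _)
  have hrank : Module.finrank ℚ W ≤ S := by
    have h1 : Set.finrank ℚ (↑((BigS k).image (fun σ => rho k σ)) : Set (ℕ → ℚ)) ≤
        ((BigS k).image (fun σ => rho k σ)).card :=
      finrank_span_finset_le_card ((BigS k).image (fun σ => rho k σ))
    unfold Set.finrank at h1
    rw [Finset.coe_image] at h1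
    exact le_trans h1 (Finset.card_image_le)
  have hm : ∀ c : ℕ, 1 ≤ c → (fun n => (greekKeyCount k (c + n) : ℚ)) ∈ W := by
    intro c hc
    have heq : (fun n => (greekKeyCount k (c + n) : ℚ)) =
        ∑ σ ∈ BigS k, lam k c σ • rho k σ := by
      funext n
      rw [key_identity k c hc n, Finset.sum_apply]
      apply Finset.sum_congr rfl
      intro σ _
      simp [Pi.smul_apply, smul_eq_mul]
    rw [heq]
    apply Submodule.sum_smul_mem
    intro σ hσ
    exact Submodule.subset_span ⟨σ, hσ, rfl⟩
  set u : Fin (S + 1) → W := fun j => ⟨fun n => (greekKeyCount k ((j : ℕ) + 1 + n) : ℚ),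
    hm ((j : ℕ) + 1) (by omega)⟩ with hu
  have hnli : ¬ LinearIndependent ℚ u := by
    intro hli
    have := hli.fintype_card_le_finrank
    rw [Fintype.card_fin] at this
    omega
  obtain ⟨g, hg0, i0, hi0⟩ := Fintype.not_linearIndependent_iff.mp hnli
  have hco : ∀ n : ℕ, ∑ j : Fin (S + 1), g j * (greekKeyCount k ((j : ℕ) + 1 + n) : ℚ) = 0 := by
    intro n
    have h2 := congrArg (fun w : W => (w : ℕ → ℚ) n) hg0
    simp only [ZeroMemClass.coe_zero, Pi.zero_apply] at h2
    rw [show ((↑(∑ j : Fin (S+1), g j • u j) : ℕ → ℚ)) = ∑ j : Fin (S+1), g j • (u j : ℕ → ℚ) by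
      push_cast
      rfl] at h2
    rw [Finset.sum_apply] at h2
    simpa [hu, Pi.smul_apply, smul_eq_mul] using h2
  set T : Finset (Fin (S + 1)) := Finset.univ.filter (fun j => g j ≠ 0) with hT
  have hTne : T.Nonempty := ⟨i0, by simp [hT, hi0]⟩
  set Dfin := T.max' hTne with hDfin
  set co : ℕ → ℚ := fun i => if h : i < S + 1 then g ⟨i, h⟩ else 0 with hcodef
  refine ⟨(Dfin : ℕ), co, ?_, ?_⟩
  · have h9 : Dfin ∈ T := T.max'_mem hTne
    rw [hT, Finset.mem_filter] at h9
    have : co (Dfin : ℕ) = g Dfin := by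
      rw [hcodef]
      simp only [Fin.isLt, dif_pos, Fin.eta]
    rw [this]
    exact h9.2
  · intro n
    have hsum : ∑ i ∈ Finset.range (S + 1), co i * (greekKeyCount k (i + 1 + n) : ℚ) = 0 := by
      rw [← Fin.sum_univ_eq_sum_range (fun i => co i * (greekKeyCount k (i + 1 + n) : ℚ)) (S + 1)]
      rw [← hco n]
      apply Finset.sum_congr rfl
      intro j _
      congr 1
      rw [hcodef]
      simp only [Fin.isLt, dif_pos, Fin.eta]
    have hsub : ∑ i ∈ Finset.range ((Dfin : ℕ) + 1), co i * (greekKeyCount k (i + 1 + n) : ℚ) =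
        ∑ i ∈ Finset.range (S + 1), co i * (greekKeyCount k (i + 1 + n) : ℚ) := by
      apply Finset.sum_subset
      · apply Finset.range_subset_range.mpr
        have := (T.max' hTne).isLt
        omega
      · intro i hi hni
        rw [Finset.mem_range] at hi
        rw [Finset.mem_range, not_lt] at hni
        have hz : co i = 0 := by
          rw [hcodef]
          simp only
          rw [dif_pos hi]
          by_contra hnz
          have hmem : (⟨i, hi⟩ : Fin (S + 1)) ∈ T := by
            rw [hT, Finset.mem_filter]
            exact ⟨Finset.mem_univ _, hnz⟩
          have h8 := T.le_max' _ hmem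
          rw [← hDfin] at h8
          have : i ≤ (Dfin : ℕ) := h8
          omega
        rw [hz, zero_mul]
    rw [hsub, hsum]

end GK

/-- For every `k ≥ 1`, the generating function `G_k(x)` counting Greek key tours
of height `k` is rational. -/
theorem greekKeyGF_rational (k : ℕ) (hk : 1 ≤ k) :
    ∃ P Q : Polynomial ℚ, Q.eval 0 ≠ 0 ∧
      (Q : PowerSeries ℚ) * greekKeyGF k = (P : PowerSeries ℚ) := by
  classical
  obtain ⟨D, co, hD, hrec⟩ := GK.exists_linear_recurrence k
  set Q : Polynomial ℚ :=
    ∑ i ∈ Finset.range (D + 1), Polynomial.C (co i) * Polynomial.X ^ (D - i) with hQ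
  have hQcoeff : ∀ m : ℕ, Q.coeff m = if m ≤ D then co (D - m) else 0 := by
    intro m
    rw [hQ, Polynomial.finset_sum_coeff]
    simp only [Polynomial.coeff_C_mul, Polynomial.coeff_X_pow]
    by_cases hm : m ≤ D
    · rw [if_pos hm, Finset.sum_eq_single (D - m)]
      · rw [if_pos (by omega)]
        ring
      · intro i hi hne
        rw [Finset.mem_range] at hi
        rw [if_neg (by omega), mul_zero]
      · intro h
        exact absurd (Finset.mem_range.mpr (by omega)) h
    · rw [if_neg hm]
      apply Finset.sum_eq_zero
      intro i hi
      rw [Finset.mem_range] at hi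
      rw [if_neg (by omega), mul_zero]
  have hQ0 : Q.eval 0 = co D := by
    rw [← Polynomial.coeff_zero_eq_eval_zero, hQcoeff 0]
    simp
  refine ⟨PowerSeries.trunc (D + 1) ((Q : PowerSeries ℚ) * greekKeyGF k), Q,
    by rw [hQ0]; exact hD, ?_⟩
  apply PowerSeries.ext
  intro N
  rw [Polynomial.coeff_coe, PowerSeries.coeff_trunc]
  by_cases hN : N < D + 1
  · rw [if_pos hN]
  · rw [if_neg hN]
    push_neg at hN
    rw [PowerSeries.coeff_mul, Finset.Nat.sum_antidiagonal_eq_sum_range_succ_mk]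
    have hterm : ∀ m ∈ Finset.range (N + 1),
        (PowerSeries.coeff (m, N - m).1) (Q : PowerSeries ℚ) *
          (PowerSeries.coeff (m, N - m).2) (greekKeyGF k) =
        (if m ≤ D then co (D - m) else 0) * (greekKeyCount k (N - m) : ℚ) := by
      intro m _
      rw [Polynomial.coeff_coe, hQcoeff m, greekKeyGF, PowerSeries.coeff_mk]
    rw [Finset.sum_congr rfl hterm]
    have hsub : ∑ m ∈ Finset.range (D + 1),
        (if m ≤ D then co (D - m) else 0) * (greekKeyCount k (N - m) : ℚ) =
        ∑ m ∈ Finset.range (N + 1),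
        (if m ≤ D then co (D - m) else 0) * (greekKeyCount k (N - m) : ℚ) := by
      apply Finset.sum_subset
      · exact Finset.range_subset_range.mpr (by omega)
      · intro m _ hm
        rw [Finset.mem_range, not_lt] at hm
        rw [if_neg (by omega), zero_mul]
    rw [← hsub]
    have hswap : ∑ m ∈ Finset.range (D + 1),
        (if m ≤ D then co (D - m) else 0) * (greekKeyCount k (N - m) : ℚ) =
        ∑ i ∈ Finset.range (D + 1), co i * (greekKeyCount k (i + 1 + (N - D - 1)) : ℚ) := by
      apply Finset.sum_nbij' (fun m => D - m) (fun i => D - i)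
      · intro a ha
        rw [Finset.mem_range] at ha ⊢
        omega
      · intro a ha
        rw [Finset.mem_range] at ha ⊢
        omega
      · intro a ha
        rw [Finset.mem_range] at ha
        omega
      · intro a ha
        rw [Finset.mem_range] at ha
        omega
      · intro a ha
        rw [Finset.mem_range] at ha
        rw [if_pos (by omega)]
        have h7 : N - a = (D - a) + 1 + (N - D - 1) := by omega
        rw [h7]
    rw [hswap, hrec (N - D - 1)]
end
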